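/- arXiv:1604.01922 — 10 statements merged into one kernel-verified Lean document; each statement's English description precedes it below -/
import Mathlib

section
/- Let G = K ⋊ H be a semidirect product where H is an abelian p-group and K is a p'-group (i.e., p does not divide |K|). If I is a subgroup of H and g ∈ G is such that gIg⁻¹ ≤ H, then gIg⁻¹ = I. That is, I is the only G-conjugate of I contained in H. -/
/-!
Write `g = k * h` with `k ∈ K`, `h ∈ H`. Since `H` is abelian, `h` centralizes `I`, so `g` acts on
`x ∈ I` as `k` does. If `k * x * k⁻¹ ∈ H`, the commutator `⁅k, x⁆` lies in `K` (normality) and in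
`H`, hence is trivial: `g` centralizes `I`.
-/

open scoped commutatorElement

namespace Subgroup

variable {G : Type*} [Group G]

theorem conj_eq_self_of_conj_mem_of_inf_eq_bot {K H : Subgroup G} (hKn : K.Normal)
    (hdisj : K ⊓ H = ⊥) {k x : G} (hk : k ∈ K) (hx : x ∈ H) (hkx : k * x * k⁻¹ ∈ H) :
    k * x * k⁻¹ = x := by
  have hK : ⁅k, x⁆ ∈ K := by
    simpa only [commutatorElement_def, mul_assoc] using
      mul_mem hk (hKn.conj_mem _ (inv_mem hk) x)
  have hH : ⁅k, x⁆ ∈ H := by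
    rw [commutatorElement_def]
    exact mul_mem hkx (inv_mem hx)
  have hcomm : ⁅k, x⁆ = 1 := by
    rw [← mem_bot, ← hdisj]
    exact ⟨hK, hH⟩
  rw [commutatorElement_eq_one_iff_mul_comm.mp hcomm, mul_inv_cancel_right]

theorem map_conj_eq_self_of_forall_mem {I : Subgroup G} {g : G}
    (hfix : ∀ x ∈ I, g * x * g⁻¹ = x) :
    I.map (MulAut.conj g).toMonoidHom = I := by
  ext y
  simp only [mem_map, MulEquiv.coe_toMonoidHom, MulAut.conj_apply]
  constructor
  · rintro ⟨x, hx, rfl⟩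
    rwa [hfix x hx]
  · exact fun hy ↦ ⟨y, hy, hfix y hy⟩

end Subgroup

open Subgroup in
theorem stmt0_general {G : Type*} [Group G]
    (K H : Subgroup G) (hKn : K.Normal) (hdisj : K ⊓ H = ⊥) (hsup : K ⊔ H = ⊤)
    (hHab : ∀ a ∈ H, ∀ b ∈ H, a * b = b * a)
    (I : Subgroup G) (hIH : I ≤ H) (g : G)
    (hg : I.map (MulAut.conj g).toMonoidHom ≤ H) :
    I.map (MulAut.conj g).toMonoidHom = I := by
  obtain ⟨k, hk, h, hh, rfl⟩ := mem_sup_of_normal_left.mp (hsup ▸ mem_top g : g ∈ K ⊔ H)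
  refine map_conj_eq_self_of_forall_mem fun x hx ↦ ?_
  have hxH : x ∈ H := hIH hx
  have hconj : k * h * x * (k * h)⁻¹ = k * x * k⁻¹ := by
    rw [mul_inv_rev, show k * h * x * (h⁻¹ * k⁻¹) = k * (h * x * h⁻¹) * k⁻¹ by group,
      hHab h hh x hxH, mul_inv_cancel_right]
  have hkxH : k * x * k⁻¹ ∈ H := hconj ▸ hg (mem_map_of_mem _ hx)
  rw [hconj, conj_eq_self_of_conj_mem_of_inf_eq_bot hKn hdisj hk hxH hkxH]

/-- In a semidirect product `G = K ⋊ H` with `H` an abelian `p`-group and `K` a `p'`-group,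
any `G`-conjugate of a subgroup `I ≤ H` landing inside `H` equals `I`. -/
theorem stmt0 {G : Type*} [Group G] [Finite G] (p : ℕ) [Fact p.Prime]
    (K H : Subgroup G) (hKn : K.Normal) (hdisj : K ⊓ H = ⊥) (hsup : K ⊔ H = ⊤)
    (hHp : IsPGroup p H) (hHab : ∀ a ∈ H, ∀ b ∈ H, a * b = b * a)
    (hK' : ¬ p ∣ Nat.card K)
    (I : Subgroup G) (hIH : I ≤ H) (g : G)
    (hg : I.map (MulAut.conj g).toMonoidHom ≤ H) :
    I.map (MulAut.conj g).toMonoidHom = I :=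
  stmt0_general K H hKn hdisj hsup hHab I hIH g hg
end

section
/- Let G = K ⋊ H be a semidirect product where H is an abelian p-group and K is a p'-group. Then every Sylow p-subgroup of G is of the form kHk⁻¹ for some k ∈ K, and the number of Sylow p-subgroups of G equals |K| / |C_K(H)|. -/
/-!
Conjugation by `g = k * h` with `k ∈ K`, `h ∈ H` acts on `H` as conjugation by `k`, so the
normal `p'`-complement `K` already acts transitively on the conjugates of `H`; these are all the
Sylow subgroups because `H` has index `|K|`, prime to `p`. An element of `K` normalizing `H`
centralizes it, since its commutators with `H` lie in `K ∩ H = 1`. Hence the stabilizer of `H`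
in `K` is `C_K(H)`, and orbit–stabilizer gives the count.
-/

open scoped Pointwise

open Subgroup MulAction

namespace Subgroup

variable {G : Type*} [Group G] {K H : Subgroup G}

theorem isComplement'_of_normal (hK : K.Normal) (hKH : K ⊓ H = ⊥) (hsup : K ⊔ H = ⊤) :
    IsComplement' K H :=
  isComplement'_of_disjoint_and_mul_eq_univ (disjoint_iff.mpr hKH) <| by
    rw [← normal_mul, hsup, coe_top]

theorem mem_centralizer_of_mem_normalizer (hK : K.Normal) (hKH : K ⊓ H = ⊥) {k : G}
    (hk : k ∈ K) (hkH : k ∈ normalizer (H : Set G)) : k ∈ centralizer (H : Set G) := by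
  rw [mem_centralizer_iff]
  intro x hx
  have hcomm_K : k * x * k⁻¹ * x⁻¹ ∈ K := by
    simpa only [mul_assoc] using K.mul_mem hk (hK.conj_mem _ (K.inv_mem hk) x)
  have hcomm_H : k * x * k⁻¹ * x⁻¹ ∈ H :=
    H.mul_mem ((mem_normalizer_iff.mp hkH x).mp hx) (H.inv_mem hx)
  have hcomm : k * x * k⁻¹ * x⁻¹ = 1 := by
    simpa only [hKH, mem_bot] using mem_inf.mpr ⟨hcomm_K, hcomm_H⟩
  rw [mul_inv_eq_one, mul_inv_eq_iff_eq_mul] at hcomm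
  exact hcomm.symm

theorem normalizer_inf_eq_centralizer_inf (hK : K.Normal) (hKH : K ⊓ H = ⊥) :
    normalizer (H : Set G) ⊓ K = centralizer (H : Set G) ⊓ K :=
  le_antisymm (fun _ ⟨hN, hk⟩ ↦ ⟨mem_centralizer_of_mem_normalizer hK hKH hk hN, hk⟩)
    (inf_le_inf_right K (centralizer_le_normalizer _))

end Subgroup

namespace Sylow

variable {G : Type*} [Group G] {p : ℕ} {K : Subgroup G}

theorem isPretransitive_of_sup_normalizer_eq_top [Fact p.Prime] [Finite (Sylow p G)]
    [K.Normal] {P : Sylow p G} (hsup : K ⊔ normalizer ((P : Subgroup G) : Set G) = ⊤) :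
    IsPretransitive K (Sylow p G) := by
  refine IsPretransitive.of_orbit (x₀ := P) fun Q ↦ ?_
  obtain ⟨g, rfl⟩ := exists_smul_eq G P Q
  obtain ⟨k, hk, n, hn, rfl⟩ : g ∈ (K : Set G) * normalizer ((P : Subgroup G) : Set G) := by
    rw [← normal_mul, hsup]; trivial
  exact ⟨⟨k, hk⟩, by rw [mul_smul, smul_eq_iff_mem_normalizer.mpr hn]; rfl⟩

theorem stabilizer_subgroup_eq (P : Sylow p G) :
    stabilizer K P = (normalizer ((P : Subgroup G) : Set G)).subgroupOf K := by
  ext k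
  exact smul_eq_iff_mem_normalizer

end Sylow

theorem stmt1_general {G : Type*} [Group G] [Finite G] (p : ℕ) [Fact p.Prime]
    (K H : Subgroup G) (hKn : K.Normal) (hdisj : K ⊓ H = ⊥) (hsup : K ⊔ H = ⊤)
    (hHp : IsPGroup p H)
    (hK' : ¬ p ∣ Nat.card K) :
    (∀ S : Sylow p G, ∃ k ∈ K, (S : Subgroup G) = H.map (MulAut.conj k).toMonoidHom) ∧
    Nat.card (Sylow p G) = Nat.card K / Nat.card ↥(Subgroup.centralizer (H : Set G) ⊓ K) := by
  have hindex : H.index = Nat.card K := (isComplement'_of_normal hKn hdisj hsup).index_eq_card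
  set P : Sylow p G := hHp.toSylow (hindex ▸ hK')
  have hP : (P : Subgroup G) = H := IsPGroup.toSylow_coe hHp _
  have : IsPretransitive K (Sylow p G) :=
    Sylow.isPretransitive_of_sup_normalizer_eq_top (P := P) <| top_le_iff.mp <|
      hsup ▸ sup_le_sup_left (hP ▸ le_normalizer) K
  have hstab : Nat.card (stabilizer K P) = Nat.card ↥(centralizer (H : Set G) ⊓ K) := by
    rw [Sylow.stabilizer_subgroup_eq, hP, ← inf_subgroupOf_right,
      normalizer_inf_eq_centralizer_inf hKn hdisj]
    exact Nat.card_congr (subgroupOfEquivOfLe inf_le_right).toEquiv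
  refine ⟨fun S ↦ ?_, ?_⟩
  · obtain ⟨k, rfl⟩ := exists_smul_eq K P S
    exact ⟨k, k.2, by rw [← hP]; rfl⟩
  · rw [← index_stabilizer_of_transitive K P, ← hstab]
    exact (Nat.div_eq_of_eq_mul_left Nat.card_pos (index_mul_card _).symm).symm

/-- In a semidirect product `G = K ⋊ H` with `H` an abelian `p`-group and `K` a `p'`-group,
every Sylow `p`-subgroup of `G` is a `K`-conjugate of `H`, and the number of Sylow
`p`-subgroups equals `|K| / |C_K(H)|`. -/
theorem stmt1 {G : Type*} [Group G] [Finite G] (p : ℕ) [Fact p.Prime]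
    (K H : Subgroup G) (hKn : K.Normal) (hdisj : K ⊓ H = ⊥) (hsup : K ⊔ H = ⊤)
    (hHp : IsPGroup p H) (hHab : ∀ a ∈ H, ∀ b ∈ H, a * b = b * a)
    (hK' : ¬ p ∣ Nat.card K) :
    (∀ S : Sylow p G, ∃ k ∈ K, (S : Subgroup G) = H.map (MulAut.conj k).toMonoidHom) ∧
    Nat.card (Sylow p G) = Nat.card K / Nat.card ↥(Subgroup.centralizer (H : Set G) ⊓ K) :=
  stmt1_general p K H hKn hdisj hsup hHp hK'
end

section
/- Let G = K ⋊ H be a semidirect product where H is an abelian p-group and K is a p'-group, and let N be a normal subgroup of K that is invariant under the conjugation action of H. Then the centralizer of the image of H in K/N equals the image of C_K(H), i.e., C_{K/N}(H) = C_K(H)·N / N. -/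
/-!
Let `H` act on `G` by conjugation. If the coset `xN` is fixed by `H` in `G/N`, then `H` permutes
the elements of `xN`; this set has `|N|` elements, prime to `p`, so the `p`-group `H` has a fixed
point `y ∈ xN`, i.e. an element of `C_G(H)` with `yN = xN`. Since `N ≤ K`, such a `y` lies in
`K` whenever `x` does.
-/

open Pointwise

theorem IsPGroup.exists_mem_centralizer_mem_leftCoset {G : Type*} [Group G] [Finite G] {p : ℕ}
    [Fact p.Prime] {P N : Subgroup G} [N.Normal] (hP : IsPGroup p P) (hN : ¬ p ∣ Nat.card N)
    {x : G} (hx : ∀ h ∈ P, x⁻¹ * (h * x * h⁻¹) ∈ N) :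
    ∃ y ∈ Subgroup.centralizer (P : Set G), y ∈ x • (N : Set G) := by
  let _ : MulAction P G := MulAction.compHom G (MulAut.conj.comp P.subtype)
  let coset : SubMulAction P G :=
    { carrier := x • (N : Set G)
      smul_mem' := fun h y hy => by
        rw [mem_leftCoset_iff] at hy ⊢
        have hconj : x⁻¹ * ((h : G) * y * (h : G)⁻¹) =
            x⁻¹ * (h * x * (h : G)⁻¹) * (h * (x⁻¹ * y) * (h : G)⁻¹) := by
          group
        exact hconj ▸ N.mul_mem (hx h h.2) (‹N.Normal›.conj_mem _ hy h) }
  have hcard : Nat.card coset = Nat.card N := Nat.card_congr (Subgroup.leftCosetEquivSubgroup x)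
  obtain ⟨⟨y, hy⟩, hfix⟩ := hP.nonempty_fixed_point_of_prime_not_dvd_card coset (hcard ▸ hN)
  refine ⟨y, Subgroup.mem_centralizer_iff.2 fun h hh => ?_, hy⟩
  have hconj : h * y * h⁻¹ = y := congrArg Subtype.val (hfix ⟨h, hh⟩)
  exact mul_inv_eq_iff_eq_mul.1 hconj

theorem QuotientGroup.mk_mem_centralizer_map_iff {G : Type*} [Group G] {N : Subgroup G}
    [N.Normal] {H : Subgroup G} {x : G} :
    (x : G ⧸ N) ∈ Subgroup.centralizer (H.map (QuotientGroup.mk' N) : Set (G ⧸ N)) ↔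
      ∀ h ∈ H, x⁻¹ * (h * x * h⁻¹) ∈ N := by
  simp only [Subgroup.mem_centralizer_iff, Subgroup.coe_map, Set.forall_mem_image,
    SetLike.mem_coe, QuotientGroup.mk'_apply, ← QuotientGroup.eq, QuotientGroup.mk_mul,
    QuotientGroup.mk_inv, ← mul_inv_eq_iff_eq_mul, eq_comm (a := (x : G ⧸ N))]

theorem stmt3_general {G : Type*} [Group G] [Finite G] (p : ℕ) [Fact p.Prime]
    (K H : Subgroup G)
    (hHp : IsPGroup p H)
    (hK' : ¬ p ∣ Nat.card K)
    (N : Subgroup G) (hNK : N ≤ K) (hNn : N.Normal) :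
    Subgroup.centralizer ((H.map (QuotientGroup.mk' N) : Subgroup (G ⧸ N)) : Set (G ⧸ N)) ⊓
        K.map (QuotientGroup.mk' N) =
      (Subgroup.centralizer (H : Set G) ⊓ K).map (QuotientGroup.mk' N) := by
  have hN : ¬ p ∣ Nat.card N := fun hd => hK' (hd.trans (Subgroup.card_dvd_of_le hNK))
  refine le_antisymm ?_ fun g hg => ⟨?_, Subgroup.map_mono inf_le_right hg⟩
  · rintro _ ⟨hc, x, hxK, rfl⟩
    obtain ⟨y, hyC, hxy⟩ :=
      hHp.exists_mem_centralizer_mem_leftCoset hN (QuotientGroup.mk_mem_centralizer_map_iff.1 hc)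
    rw [mem_leftCoset_iff] at hxy
    have hyK : y ∈ K := by simpa using K.mul_mem hxK (hNK hxy)
    exact ⟨y, ⟨hyC, hyK⟩, (QuotientGroup.eq.2 hxy).symm⟩
  · exact Subgroup.map_centralizer_le_centralizer_image _ _
      (Subgroup.map_mono inf_le_left hg)

/-- In a semidirect product `G = K ⋊ H` with `H` an abelian `p`-group and `K` a `p'`-group,
if `N ≤ K` is a normal (in `G`, i.e. normal in `K` and `H`-invariant) subgroup, then the
centralizer of the image of `H` inside the image of `K` in `G/N` is the image of
`C_K(H)`, i.e. `C_{K/N}(H) = C_K(H)·N/N`. -/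
theorem stmt3 {G : Type*} [Group G] [Finite G] (p : ℕ) [Fact p.Prime]
    (K H : Subgroup G) (hKn : K.Normal) (hdisj : K ⊓ H = ⊥) (hsup : K ⊔ H = ⊤)
    (hHp : IsPGroup p H) (hHab : ∀ a ∈ H, ∀ b ∈ H, a * b = b * a)
    (hK' : ¬ p ∣ Nat.card K)
    (N : Subgroup G) (hNK : N ≤ K) (hNn : N.Normal) :
    Subgroup.centralizer ((H.map (QuotientGroup.mk' N) : Subgroup (G ⧸ N)) : Set (G ⧸ N)) ⊓
        K.map (QuotientGroup.mk' N) =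
      (Subgroup.centralizer (H : Set G) ⊓ K).map (QuotientGroup.mk' N) :=
  stmt3_general p K H hHp hK' N hNK hNn
end

section
/- Let G = K ⋊ H with H ≅ (ℤ/p)^r an elementary abelian p-group of rank r acting faithfully on the p'-group K. Then there exist r hyperplanes H₁, …, H_r of H (subgroups of index p) whose intersection is trivial (equivalently, which are linearly independent as elements of the dual space) such that C_K(H_i) strictly contains C_K(H) for each i. -/
/-!
Let `𝒮` be the set of hyperplanes `M` of `H` with `C_K(H) < C_K(M)`. An element `h` lying in every
member of `𝒮` centralizes `C_K(M)` for every hyperplane `M`, and these centralizers generate `K`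
(the generation theorem for coprime actions of elementary abelian groups); so `h` acts trivially
and `h = 1` by faithfulness. In a group of order `p ^ r`, a family of subgroups with trivial
intersection contains `r` members with trivial intersection, because adding a member that does not
contain the current intersection multiplies its index by at least `p`.

The generation theorem reduces, via an invariant Sylow subgroup and coprime lifting of fixed points
through invariant normal subgroups, to an abelian `q`-group `Q` without proper nontrivial invariant
subgroups. There `C_Q(g) = 1` for every `g` acting nontrivially, so the norms `∏ₜ gᵗ • x` vanish.
If `a, b` were independent modulo the kernel, summing these norms over the `p + 1` lines of
`⟨a, b⟩ ≅ (ℤ/p)²` would give `x ^ p = 1` for all `x`, which coprimality forbids; hence the kernel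
is a hyperplane or all of `H`.
-/

open Subgroup

section Action

variable {A K : Type*} [Group A] [Group K]

def fixedSubgroup (φ : A →* MulAut K) (S : Set A) : Subgroup K where
  carrier := {k | ∀ a ∈ S, φ a k = k}
  one_mem' a _ := map_one (φ a)
  mul_mem' hx hy a ha := by rw [map_mul, hx a ha, hy a ha]
  inv_mem' hx a ha := by rw [map_inv, hx a ha]

variable {φ : A →* MulAut K}

@[simp]
lemma mem_fixedSubgroup {S : Set A} {k : K} : k ∈ fixedSubgroup φ S ↔ ∀ a ∈ S, φ a k = k :=
  Iff.rfl

lemma mem_fixedSubgroup_singleton {g : A} {k : K} : k ∈ fixedSubgroup φ {g} ↔ φ g k = k := by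
  simp

lemma fixedSubgroup_antitone : Antitone (fixedSubgroup φ) :=
  fun _ _ h _ hk a ha => hk a (h ha)

lemma fixedSubgroup_eq_top_of_le_ker {M : Subgroup A} (h : M ≤ φ.ker) : fixedSubgroup φ M = ⊤ :=
  eq_top_iff.2 fun k _ a ha => by rw [(MonoidHom.mem_ker.1 (h ha) : φ a = 1)]; rfl

def IsStable (φ : A →* MulAut K) (N : Subgroup K) : Prop :=
  ∀ a, ∀ x ∈ N, φ a x ∈ N

lemma IsStable.map_eq {N : Subgroup K} (hN : IsStable φ N) (a : A) :
    N.map (φ a).toMonoidHom = N := by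
  refine le_antisymm (map_le_iff_le_comap.2 fun x hx => hN a x hx) fun x hx => ?_
  refine ⟨φ a⁻¹ x, hN a⁻¹ x hx, ?_⟩
  simp [MulAut.inv_def]

lemma isStable_of_characteristic (N : Subgroup K) [hN : N.Characteristic] : IsStable φ N :=
  fun a x hx => by
    rw [← hN.fixed (φ a)] at hx
    exact hx

lemma isStable_fixedSubgroup {A : Type*} [CommGroup A] (φ : A →* MulAut K) (S : Set A) :
    IsStable φ (fixedSubgroup φ S) := fun a x hx b hb => by
  rw [← MulAut.mul_apply, ← map_mul, mul_comm, map_mul, MulAut.mul_apply, hx b hb]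

def restrictAut (φ : A →* MulAut K) (N : Subgroup K) (hN : IsStable φ N) : A →* MulAut N where
  toFun a := ((φ a).subgroupMap N).trans (MulEquiv.subgroupCongr (hN.map_eq a))
  map_one' := by ext x; show φ 1 x = x; rw [map_one]; rfl
  map_mul' a b := by ext x; show φ (a * b) x = φ a (φ b x); rw [map_mul]; rfl

def quotAut (φ : A →* MulAut K) (N : Subgroup K) [N.Normal] (hN : IsStable φ N) :
    A →* MulAut (K ⧸ N) where
  toFun a := QuotientGroup.congr N N (φ a) (hN.map_eq a)
  map_one' := by
    ext x; induction x using QuotientGroup.induction_on with | H x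
    show ((φ 1 x : K) : K ⧸ N) = x; rw [map_one]; rfl
  map_mul' a b := by
    ext x; induction x using QuotientGroup.induction_on with | H x
    show ((φ (a * b) x : K) : K ⧸ N) = (φ a (φ b x) : K); rw [map_mul]; rfl

@[simp]
lemma quotAut_apply_mk {N : Subgroup K} [N.Normal] (hN : IsStable φ N) (a : A) (x : K) :
    quotAut φ N hN a x = (φ a x : K ⧸ N) :=
  rfl

lemma map_subtype_fixedSubgroup_restrictAut_le {N : Subgroup K} (hN : IsStable φ N) (S : Set A) :
    (fixedSubgroup (restrictAut φ N hN) S).map N.subtype ≤ fixedSubgroup φ S := by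
  rintro _ ⟨x, hx, rfl⟩ a ha
  exact congrArg Subtype.val (hx a ha)

lemma fixedSubgroup_quotAut_le_map [Finite K] {p : ℕ} [Fact p.Prime]
    (hcop : (Nat.card K).Coprime p) {N : Subgroup K} [N.Normal] (hN : IsStable φ N)
    {M : Subgroup A} (hM : IsPGroup p M) :
    fixedSubgroup (quotAut φ N hN) M ≤ (fixedSubgroup φ M).map (QuotientGroup.mk' N) := by
  intro y hy
  let fiber := {x : K // (x : K ⧸ N) = y}
  let _ : MulAction M fiber :=
    { smul a x := ⟨φ a x, by rw [← quotAut_apply_mk hN, x.2, hy a a.2]⟩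
      one_smul x := Subtype.ext (by simp [HSMul.hSMul])
      mul_smul a b x := Subtype.ext (by simp [HSMul.hSMul]) }
  have hfiber : ¬ p ∣ Nat.card fiber := by
    obtain ⟨x₀, rfl⟩ := QuotientGroup.mk_surjective y
    have : Nat.card fiber = Nat.card N := Nat.card_congr
      { toFun x := ⟨x₀⁻¹ * x, QuotientGroup.eq.1 x.2.symm⟩
        invFun n := ⟨x₀ * n, by simp⟩
        left_inv x := by simp
        right_inv n := by simp }
    rw [this]
    exact fun hp => (Nat.Prime.coprime_iff_not_dvd Fact.out).1 hcop.symm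
      (hp.trans N.card_subgroup_dvd_card)
  obtain ⟨x, hx⟩ := hM.nonempty_fixed_point_of_prime_not_dvd_card fiber hfiber
  exact ⟨x, fun a ha => congrArg Subtype.val (hx ⟨a, ha⟩), x.2⟩

end Action

section Generation

variable {A K : Type*} [Group A] [Group K] {φ : A →* MulAut K} {p : ℕ}

def hyperplaneFixedSup (p : ℕ) (φ : A →* MulAut K) : Subgroup K :=
  ⨆ (M : Subgroup A) (_ : M.index = p), fixedSubgroup φ M

lemma fixedSubgroup_le_hyperplaneFixedSup {M : Subgroup A} (hM : M.index = p) :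
    fixedSubgroup φ M ≤ hyperplaneFixedSup p φ :=
  le_iSup₂ (f := fun (M : Subgroup A) (_ : M.index = p) => fixedSubgroup φ M) M hM

lemma le_hyperplaneFixedSup_of_restrictAut {N : Subgroup K} (hN : IsStable φ N)
    (h : hyperplaneFixedSup p (restrictAut φ N hN) = ⊤) : N ≤ hyperplaneFixedSup p φ := by
  calc N = (hyperplaneFixedSup p (restrictAut φ N hN)).map N.subtype := by
        rw [h, ← MonoidHom.range_eq_map, range_subtype]
    _ = ⨆ (M : Subgroup A) (_ : M.index = p),
          (fixedSubgroup (restrictAut φ N hN) M).map N.subtype := by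
        simp only [hyperplaneFixedSup, Subgroup.map_iSup]
    _ ≤ hyperplaneFixedSup p φ :=
        iSup₂_mono fun M _ => map_subtype_fixedSubgroup_restrictAut_le hN M

lemma sup_hyperplaneFixedSup_eq_top_of_quotAut [Finite K] [Fact p.Prime] (hA : IsPGroup p A)
    (hcop : (Nat.card K).Coprime p) {N : Subgroup K} [N.Normal] (hN : IsStable φ N)
    (h : hyperplaneFixedSup p (quotAut φ N hN) = ⊤) : hyperplaneFixedSup p φ ⊔ N = ⊤ := by
  have hmap : (hyperplaneFixedSup p φ).map (QuotientGroup.mk' N) = ⊤ := by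
    refine eq_top_iff.2 (h ▸ iSup₂_le fun M hM => ?_)
    refine (fixedSubgroup_quotAut_le_map hcop hN (hA.to_subgroup M)).trans (map_mono ?_)
    exact fixedSubgroup_le_hyperplaneFixedSup hM
  simpa [hmap] using (comap_map_eq (QuotientGroup.mk' N) (hyperplaneFixedSup p φ)).symm

lemma hyperplaneFixedSup_eq_top_of_isStable [Finite K] [Fact p.Prime] (hA : IsPGroup p A)
    (hcop : (Nat.card K).Coprime p) {N : Subgroup K} [N.Normal] (hN : IsStable φ N)
    (hsub : hyperplaneFixedSup p (restrictAut φ N hN) = ⊤)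
    (hquot : hyperplaneFixedSup p (quotAut φ N hN) = ⊤) : hyperplaneFixedSup p φ = ⊤ := by
  rw [← sup_hyperplaneFixedSup_eq_top_of_quotAut hA hcop hN hquot,
    sup_eq_left.2 (le_hyperplaneFixedSup_of_restrictAut hN hsub)]

end Generation

section FixedPointFree

variable {p : ℕ} [Fact p.Prime]

lemma pow_eq_pow_of_natCast_eq {G : Type*} [Monoid G] {g : G} (hg : g ^ p = 1) {m n : ℕ}
    (h : (m : ZMod p) = n) : g ^ m = g ^ n := by
  rw [pow_eq_pow_mod m hg, pow_eq_pow_mod n hg, (ZMod.natCast_eq_natCast_iff' m n p).1 h]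

/-- Each nonzero point of `(ZMod p)²` lies on exactly one line through the origin, and the
origin lies on all `p + 1` of them. -/
lemma ZMod.prod_lines_mul_prod_vertical {M : Type*} [CommMonoid M] (f : ZMod p × ZMod p → M) :
    (∏ c, ∏ t, f (t, c * t)) * ∏ t, f (0, t) = f (0, 0) ^ p * ∏ z, f z := by
  have hline : ∀ t ∈ ({0}ᶜ : Finset (ZMod p)), ∏ c, f (t, c * t) = ∏ j, f (t, j) := fun t ht =>
    Fintype.prod_equiv (Equiv.mulRight₀ t (by simpa using ht)) _ _ fun _ => rfl
  rw [Finset.prod_comm, Fintype.prod_prod_type, Fintype.prod_eq_mul_prod_compl 0,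
    Fintype.prod_eq_mul_prod_compl (0 : ZMod p) (fun i => ∏ j, f (i, j)),
    Finset.prod_congr rfl hline]
  simp only [mul_zero, Finset.prod_const, Finset.card_univ, ZMod.card]
  ac_rfl

lemma exists_forall_mul_pow_val_notMem {A : Type*} [CommGroup A] (hexp : ∀ a : A, a ^ p = 1)
    {κ : Subgroup A} (h1 : κ.index ≠ 1) (hp : κ.index ≠ p) :
    ∃ a b : A, b ∉ κ ∧ ∀ c : ZMod p, a * b ^ c.val ∉ κ := by
  obtain ⟨a, ha⟩ : ∃ a, a ∉ κ := by
    by_contra! h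
    exact h1 (index_eq_one.2 ((eq_top_iff' κ).2 h))
  have hsup : κ ⊔ zpowers a ≠ ⊤ := fun htop => by
    have hdvd : κ.index ∣ p := by
      rw [← relIndex_top_right, ← htop, relIndex_sup_left]
      exact (relIndex_dvd_card _ _).trans
        ((Nat.card_zpowers a).symm ▸ orderOf_dvd_of_pow_eq_one (hexp a))
    rcases (Nat.dvd_prime Fact.out).1 hdvd with h | h <;> contradiction
  obtain ⟨b, hb⟩ : ∃ b, b ∉ κ ⊔ zpowers a := by
    by_contra! h
    exact hsup ((eq_top_iff' _).2 h)
  refine ⟨a, b, fun h => hb (mem_sup_left h), fun c hc => ?_⟩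
  rcases eq_or_ne c 0 with rfl | hc0
  · simp_all
  have hbc : b ^ c.val ∈ κ ⊔ zpowers a := by
    simpa using mul_mem (mem_sup_right (inv_mem (mem_zpowers a))) (mem_sup_left hc)
  have hcop : c.val.Coprime (orderOf b) :=
    ((Nat.coprime_of_lt_prime (by simpa using hc0) c.val_lt Fact.out).symm).coprime_dvd_right
      (orderOf_dvd_of_pow_eq_one (hexp b))
  exact hb (zpowers_le.2 hbc (mem_zpowers_pow_iff.2 hcop))

variable {A Q : Type*} [CommGroup A] [CommGroup Q] {φ : A →* MulAut Q}

lemma prod_pow_val_apply_eq_one {g : A} (hg : g ^ p = 1) (hfree : fixedSubgroup φ {g} = ⊥)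
    (x : Q) : ∏ t : ZMod p, φ (g ^ t.val) x = 1 := by
  rw [← mem_bot, ← hfree, mem_fixedSubgroup_singleton, map_prod]
  refine Fintype.prod_equiv (Equiv.addRight 1) _ _ fun t => ?_
  rw [← MulAut.mul_apply, ← map_mul, ← pow_succ', Equiv.coe_addRight]
  congr 2
  exact pow_eq_pow_of_natCast_eq hg (by simp)

lemma index_ker_eq_one_or_eq_prime [Finite Q] [Nontrivial Q] (hexp : ∀ a : A, a ^ p = 1)
    (hcop : (Nat.card Q).Coprime p) (hfree : ∀ g ∉ φ.ker, fixedSubgroup φ {g} = ⊥) :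
    φ.ker.index = 1 ∨ φ.ker.index = p := by
  by_contra! h
  obtain ⟨a, b, hb, hab⟩ := exists_forall_mul_pow_val_notMem hexp h.1 h.2
  have ha : a ∉ φ.ker := by simpa using hab 0
  have hnorm {g : A} (hg : g ∉ φ.ker) (y : Q) : ∏ t : ZMod p, φ (g ^ t.val) y = 1 :=
    prod_pow_val_apply_eq_one (hexp g) (hfree g hg) y
  have hpow (x : Q) : x ^ p = 1 := by
    have hlines := ZMod.prod_lines_mul_prod_vertical
      fun z : ZMod p × ZMod p => φ (a ^ z.1.val * b ^ z.2.val) x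
    have hslope (c : ZMod p) : ∏ t : ZMod p, φ (a ^ t.val * b ^ (c * t).val) x = 1 := by
      rw [← hnorm (hab c) x]
      refine Finset.prod_congr rfl fun t _ => ?_
      rw [mul_pow, ← pow_mul, pow_eq_pow_of_natCast_eq (hexp b) (m := c.val * t.val)
        (n := (c * t).val) (by simp)]
    have hall : ∏ z : ZMod p × ZMod p, φ (a ^ z.1.val * b ^ z.2.val) x = 1 := by
      rw [Fintype.prod_prod_type, Finset.prod_comm]
      refine Finset.prod_eq_one fun j _ => ?_
      simp only [map_mul, MulAut.mul_apply]
      exact hnorm ha _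
    simpa only [Finset.prod_eq_one fun c _ => hslope c, hall, hnorm hb x, ZMod.val_zero, pow_zero,
      one_mul, mul_one, map_one, MulAut.one_apply] using hlines.symm
  obtain ⟨x, hx⟩ := exists_ne (1 : Q)
  exact hx (orderOf_eq_one_iff.1 (Nat.eq_one_of_dvd_coprimes hcop (orderOf_dvd_natCard x)
    (orderOf_dvd_of_pow_eq_one (hpow x))))

end FixedPointFree

section Sylow

open scoped Pointwise

lemma IsPGroup.of_forall_pow_eq_one {p : ℕ} {G : Type*} [Group G] (hexp : ∀ g : G, g ^ p = 1) :
    IsPGroup p G :=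
  fun g => ⟨1, by rw [pow_one, hexp]⟩

variable {p : ℕ} [Fact p.Prime] {A : Type*} [Group A]

lemma IsPGroup.exists_index_eq_prime [Finite A] [Nontrivial A] (hA : IsPGroup p A) :
    ∃ M : Subgroup A, M.index = p := by
  obtain ⟨n, hn⟩ := (IsPGroup.iff_card (p := p)).1 hA
  have hn0 : n ≠ 0 := by
    rintro rfl
    exact (Finite.one_lt_card (α := A)).ne' (by simpa using hn)
  obtain ⟨M, hM⟩ := Sylow.exists_subgroup_card_pow_prime p (n := n - 1)
    (hn ▸ pow_dvd_pow p (Nat.sub_le n 1))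
  refine ⟨M, Nat.eq_of_mul_eq_mul_left (pow_pos (Fact.out : p.Prime).pos (n - 1)) ?_⟩
  rw [← pow_succ, Nat.sub_add_cancel (Nat.pos_of_ne_zero hn0), ← hn, ← hM, card_mul_index]

lemma IsPGroup.card_coprime_of_ne {q : ℕ} [Fact q.Prime] {Q : Type*} [Group Q] [Finite Q]
    (hQ : IsPGroup q Q) (hqp : q ≠ p) : (Nat.card Q).Coprime p := by
  obtain ⟨m, hm⟩ := (IsPGroup.iff_card (p := q)).1 hQ
  rw [hm]
  exact Nat.Coprime.pow_left m ((Nat.coprime_primes Fact.out Fact.out).2 hqp)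

lemma exists_sylow_isStable {K : Type*} [Group K] [Finite K] (hA : IsPGroup p A)
    (hcop : (Nat.card K).Coprime p) (φ : A →* MulAut K) (q : ℕ) [Fact q.Prime] :
    ∃ P : Sylow q K, IsStable φ P := by
  let _ : MulDistribMulAction A K := MulDistribMulAction.compHom K φ
  have hcard : ¬ p ∣ Nat.card (Sylow q K) := fun hdvd =>
    (Nat.Prime.coprime_iff_not_dvd Fact.out).1 hcop.symm
      (hdvd.trans ((Sylow.card_dvd_index default).trans (index_dvd_card _)))
  obtain ⟨P, hP⟩ := hA.nonempty_fixed_point_of_prime_not_dvd_card (Sylow q K) hcard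
  refine ⟨P, fun a x hx => ?_⟩
  have hx' : a • x ∈ a • (P : Subgroup K) := smul_mem_pointwise_smul x a _ hx
  rwa [← Sylow.pointwise_smul_def, MulAction.mem_fixedPoints.1 hP a] at hx'

end Sylow

section MainGeneration

variable {p : ℕ} [Fact p.Prime] {A : Type*} [CommGroup A] [Finite A] [Nontrivial A]

lemma hyperplaneFixedSup_eq_top_of_forall_isStable (hexp : ∀ a : A, a ^ p = 1) {q : ℕ}
    [Fact q.Prime] (hqp : q ≠ p) {Q : Type*} [Group Q] [Finite Q] (hQ : IsPGroup q Q)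
    {φ : A →* MulAut Q} (hirr : ∀ N : Subgroup Q, N.Normal → IsStable φ N → N ≠ ⊥ → N = ⊤) :
    hyperplaneFixedSup p φ = ⊤ := by
  rcases subsingleton_or_nontrivial Q with _ | _
  · exact Subsingleton.elim _ _
  have hcenter : center Q = ⊤ := hirr _ inferInstance (isStable_of_characteristic _)
    ((nontrivial_iff_ne_bot _).1 hQ.center_nontrivial)
  let _ := Group.commGroupOfCenterEqTop hcenter
  have hfree : ∀ g ∉ φ.ker, fixedSubgroup φ {g} = ⊥ := fun g hg => by
    by_contra hne
    refine hg (MulEquiv.ext fun x => ?_)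
    exact mem_fixedSubgroup_singleton.1
      ((hirr _ (normal_of_isMulCommutative _) (isStable_fixedSubgroup φ {g}) hne).ge (mem_top x))
  obtain ⟨M, hM, hker⟩ : ∃ M : Subgroup A, M.index = p ∧ M ≤ φ.ker := by
    rcases index_ker_eq_one_or_eq_prime hexp (hQ.card_coprime_of_ne hqp) hfree with h1 | hp
    · obtain ⟨M, hM⟩ := (IsPGroup.of_forall_pow_eq_one hexp).exists_index_eq_prime
      exact ⟨M, hM, index_eq_one.1 h1 ▸ le_top⟩
    · exact ⟨_, hp, le_rfl⟩
  exact eq_top_iff.2 ((fixedSubgroup_eq_top_of_le_ker hker).ge.trans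
    (fixedSubgroup_le_hyperplaneFixedSup hM))

theorem hyperplaneFixedSup_eq_top_of_isPGroup (hexp : ∀ a : A, a ^ p = 1) {q : ℕ} [Fact q.Prime]
    (hqp : q ≠ p) {Q : Type*} [Group Q] [Finite Q] (hQ : IsPGroup q Q) (φ : A →* MulAut Q) :
    hyperplaneFixedSup p φ = ⊤ := by
  induction h : Nat.card Q using Nat.strong_induction_on generalizing Q with
  | _ n ih =>
  by_cases hred : ∃ N : Subgroup Q, N.Normal ∧ IsStable φ N ∧ N ≠ ⊥ ∧ N ≠ ⊤
  · obtain ⟨N, hN, hNs, hbot, htop⟩ := hred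
    refine hyperplaneFixedSup_eq_top_of_isStable (.of_forall_pow_eq_one hexp)
      (hQ.card_coprime_of_ne hqp) hNs
      (ih _ ?_ (hQ.to_subgroup N) _ rfl) (ih _ ?_ (hQ.to_quotient N) _ rfl)
    · rw [← h, ← N.card_mul_index]
      exact lt_mul_of_one_lt_right Nat.card_pos (one_lt_index_of_ne_top htop)
    · rw [← h, ← N.card_mul_index, mul_comm]
      exact lt_mul_of_one_lt_right (Nat.pos_of_ne_zero N.index_ne_zero_of_finite)
        (N.one_lt_card_iff_ne_bot.2 hbot)
  push Not at hred
  exact hyperplaneFixedSup_eq_top_of_forall_isStable hexp hqp hQ hred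

theorem hyperplaneFixedSup_eq_top (hexp : ∀ a : A, a ^ p = 1) {K : Type*} [Group K] [Finite K]
    (hcop : (Nat.card K).Coprime p) (φ : A →* MulAut K) : hyperplaneFixedSup p φ = ⊤ := by
  by_contra hT
  obtain ⟨q, hq, hqT⟩ := Nat.exists_prime_and_dvd (mt index_eq_one.1 hT)
  have : Fact q.Prime := ⟨hq⟩
  have hqp : q ≠ p := by
    rintro rfl
    exact (Nat.Prime.coprime_iff_not_dvd hq).1 hcop.symm (hqT.trans (index_dvd_card _))
  obtain ⟨P, hP⟩ := exists_sylow_isStable (.of_forall_pow_eq_one hexp) hcop φ q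
  have hPT : (P : Subgroup K) ≤ hyperplaneFixedSup p φ := le_hyperplaneFixedSup_of_restrictAut hP
    (hyperplaneFixedSup_eq_top_of_isPGroup hexp hqp P.isPGroup' _)
  exact P.not_dvd_index (hqT.trans (index_dvd_of_le hPT))

end MainGeneration

section Selection

variable {p : ℕ} [Fact p.Prime] {A : Type*} [Group A] [Finite A]

lemma iInf_fin_cons {α : Type*} [CompleteLattice α] {k : ℕ} (x : α) (f : Fin k → α) :
    ⨅ i, (Fin.cons x f : Fin (k + 1) → α) i = x ⊓ ⨅ i, f i := by
  rw [iInf, Fin.range_cons, sInf_insert]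
  rfl

lemma IsPGroup.mul_index_le_index_of_lt (hA : IsPGroup p A) {S N : Subgroup A} (h : S < N) :
    p * N.index ≤ S.index := by
  rw [← relIndex_mul_index h.le]
  refine Nat.mul_le_mul_right _ ?_
  obtain ⟨m, hm⟩ := (IsPGroup.iff_card (p := p)).1 (hA.to_subgroup N)
  obtain ⟨j, -, hj⟩ := (Nat.dvd_prime_pow Fact.out).1 (hm ▸ relIndex_dvd_card S N)
  have hj0 : j ≠ 0 := by
    rintro rfl
    exact not_le_of_gt h (relIndex_eq_one.1 hj)
  exact hj ▸ Nat.le_self_pow hj0 p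

theorem exists_fin_iInf_eq_bot_of_sInf_eq_bot {r : ℕ} (hcard : Nat.card A = p ^ r)
    {𝒮 : Set (Subgroup A)} (h : sInf 𝒮 = ⊥) :
    ∃ H : Fin r → Subgroup A, (∀ i, H i ∈ 𝒮) ∧ ⨅ i, H i = ⊥ := by
  have hA : IsPGroup p A := IsPGroup.of_card hcard
  have hgrow : ∀ k ≤ r, ∃ H : Fin k → Subgroup A, (∀ i, H i ∈ 𝒮) ∧ p ^ k ≤ (⨅ i, H i).index := by
    intro k
    induction k with
    | zero => exact fun _ => ⟨Fin.elim0, fun i => i.elim0,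
        pow_zero p ▸ Nat.one_le_iff_ne_zero.2 index_ne_zero_of_finite⟩
    | succ k ih =>
      intro hk
      obtain ⟨H, hH𝒮, hH⟩ := ih (by omega)
      obtain ⟨W, hW𝒮, hW⟩ : ∃ W ∈ 𝒮, p ^ (k + 1) ≤ (W ⊓ ⨅ i, H i).index := by
        by_cases hbot : ⨅ i, H i = ⊥
        · obtain ⟨W, hW⟩ : 𝒮.Nonempty := by
            refine Set.nonempty_iff_ne_empty.2 fun h𝒮 => ?_
            have h1 := congrArg index h
            rw [h𝒮, sInf_empty, index_top, index_bot, hcard] at h1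
            exact (Nat.one_lt_pow (by omega) (Fact.out : p.Prime).one_lt).ne h1
          refine ⟨W, hW, ?_⟩
          rw [hbot, inf_bot_eq, index_bot, hcard]
          exact Nat.pow_le_pow_right (Fact.out : p.Prime).pos hk
        · obtain ⟨W, hW, hnot⟩ : ∃ W ∈ 𝒮, ¬ (⨅ i, H i) ≤ W := by
            by_contra! hall
            exact hbot (eq_bot_iff.2 (h ▸ le_sInf hall))
          refine ⟨W, hW, ?_⟩
          calc p ^ (k + 1) = p * p ^ k := pow_succ' p k
            _ ≤ p * (⨅ i, H i).index := Nat.mul_le_mul_left p hH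
            _ ≤ (W ⊓ ⨅ i, H i).index := hA.mul_index_le_index_of_lt (inf_lt_right.2 hnot)
      exact ⟨Fin.cons W H, Fin.cases hW𝒮 hH𝒮, by rwa [iInf_fin_cons]⟩
  obtain ⟨H, hH𝒮, hH⟩ := hgrow r le_rfl
  refine ⟨H, hH𝒮, eq_bot_of_card_le _ (Nat.le_of_mul_le_mul_right ?_
    (Nat.pos_of_ne_zero (⨅ i, H i).index_ne_zero_of_finite))⟩
  rw [card_mul_index, hcard, one_mul]
  exact hH

end Selection

theorem sInf_setOf_fixedSubgroup_lt_eq_bot {p : ℕ} [Fact p.Prime] {A : Type*} [CommGroup A]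
    [Finite A] (hexp : ∀ a : A, a ^ p = 1) {K : Type*} [Group K] [Finite K]
    (hcop : (Nat.card K).Coprime p) {φ : A →* MulAut K} (hφ : Function.Injective φ) :
    sInf {M : Subgroup A | M.index = p ∧ fixedSubgroup φ Set.univ < fixedSubgroup φ M} = ⊥ := by
  rcases subsingleton_or_nontrivial A with _ | _
  · exact Subsingleton.elim _ _
  refine eq_bot_iff.2 fun h hh => ?_
  have hle : ∀ S : Set A, fixedSubgroup φ Set.univ ≤ fixedSubgroup φ S :=
    fun S => fixedSubgroup_antitone (Set.subset_univ S)
  have hfix : hyperplaneFixedSup p φ ≤ fixedSubgroup φ {h} := iSup₂_le fun M hM => by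
    by_cases hlt : fixedSubgroup φ Set.univ < fixedSubgroup φ M
    · exact fixedSubgroup_antitone (Set.singleton_subset_iff.2 (mem_sInf.1 hh M ⟨hM, hlt⟩))
    · exact ((hle M).eq_of_not_lt hlt).ge.trans (hle {h})
  rw [hyperplaneFixedSup_eq_top hexp hcop φ, top_le_iff] at hfix
  refine hφ ((MulEquiv.ext fun x => ?_).trans (map_one φ).symm)
  exact mem_fixedSubgroup_singleton.1 (hfix ▸ mem_top x)

/-- If the elementary abelian group `H = (ℤ/p)^r` acts faithfully on a `p'`-group `K`,
then there exist `r` linearly independent hyperplanes `H₁, …, H_r` of `H`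
(index-`p` subgroups with trivial intersection) with `C_K(H) ⊊ C_K(Hᵢ)` for each `i`. -/
theorem stmt4 (p r : ℕ) [Fact p.Prime] {K : Type*} [Group K] [Finite K]
    (hcop : (Nat.card K).Coprime p)
    (φ : Multiplicative (Fin r → ZMod p) →* MulAut K)
    (hfaithful : Function.Injective φ) :
    ∃ Hs : Fin r → Subgroup (Multiplicative (Fin r → ZMod p)),
      (∀ i, (Hs i).index = p) ∧ (⨅ i, Hs i) = ⊥ ∧
      ∀ i, {k : K | ∀ h : Multiplicative (Fin r → ZMod p), φ h k = k} ⊂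
        {k : K | ∀ h ∈ Hs i, φ h k = k} := by
  have hexp (a : Multiplicative (Fin r → ZMod p)) : a ^ p = 1 := by
    ext i
    simp
  obtain ⟨Hs, hHs, hinf⟩ := exists_fin_iInf_eq_bot_of_sInf_eq_bot (p := p) (r := r) (by simp)
    (sInf_setOf_fixedSubgroup_lt_eq_bot hexp hcop hfaithful)
  refine ⟨Hs, fun i => (hHs i).1, hinf, fun i => ?_⟩
  convert SetLike.coe_ssubset_coe.2 (hHs i).2 using 1
  · ext
    simp
  · rfl
end

section
/- For sequences [i₁,…,i_{r−1}] and [j₁,…,j_{r−1}] of distinct elements of {1,…,r} such that i_s = j_s for all s ≤ r−2 but i_{r−1} ≠ j_{r−1}, the signatures satisfy ε_{[i₁,…,i_{r−1}]} + ε_{[j₁,…,j_{r−1}]} = 0. -/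
/-- Number of inversions of a list of naturals: pairs of positions out of order. -/
def inversionCount (l : List ℕ) : ℕ :=
  (Finset.univ.filter
    (fun q : Fin l.length × Fin l.length => q.1.1 < q.2.1 ∧ l.get q.2 < l.get q.1)).card

/-- Number of positions at which the increasing rearrangement of `l` differs from
`[1, 2, …, l.length]`. -/
def mismatchCount (l : List ℕ) : ℕ :=
  ((List.range l.length).filter (fun i => (l.mergeSort (· ≤ ·)).getD i 0 ≠ i + 1)).length

/-- The signature `ε_{[i₁,…,i_l]} = (−1)^{n+m}` of a sequence, where `n` is the number of
transpositions needed to sort it (parity given by the inversion count) and `m` the number of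
entries where the sorted sequence differs from `[1,…,l]`. -/
def signatureOf (l : List ℕ) : ℤ := (-1) ^ (inversionCount l + mismatchCount l)
/-! Write `l₁ = P ++ [a]` and `l₂ = P ++ [b]` with `a < b`. Then `l₁` misses exactly `b` from
`{1, …, r}` and `l₂` misses exactly `a`. A sorted arrangement of `{1, …, r} \ {c}` agrees with
`[1, …, r - 1]` exactly in its first `c - 1` entries, so it has `r - c` mismatches. Appending `x` to
`P` creates `#{p ∈ P | x < p}` new inversions: `r - a - 1` for `x = a` (everything in `(a, r]` but
`b`) and `r - b` for `x = b`. The two exponents are therefore `inv P + (r - a - 1) + (r - b)` and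
`inv P + (r - b) + (r - a)`, which differ by one. -/

open Finset

lemma inversionCount_eq_sum_range (l : List ℕ) :
    inversionCount l = ∑ i ∈ range l.length, ∑ j ∈ range l.length,
      if i < j ∧ l.getD j 0 < l.getD i 0 then 1 else 0 := by
  rw [inversionCount, card_filter, Fintype.sum_prod_type, ← Fin.sum_univ_eq_sum_range]
  refine sum_congr rfl fun i _ => ?_
  rw [← Fin.sum_univ_eq_sum_range]
  simp

lemma countP_eq_sum_range (l : List ℕ) (p : ℕ → Bool) :
    l.countP p = ∑ i ∈ range l.length, if p (l.getD i 0) then 1 else 0 := by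
  induction l with
  | nil => rfl
  | cons y l ih =>
    rw [List.countP_cons, ih, List.length_cons, sum_range_succ']
    rfl

lemma inversionCount_append_singleton (P : List ℕ) (x : ℕ) :
    inversionCount (P ++ [x]) = inversionCount P + P.countP (x < ·) := by
  rw [inversionCount_eq_sum_range, inversionCount_eq_sum_range, countP_eq_sum_range,
    List.length_append, List.length_singleton, sum_range_succ]
  have hlast : ∑ j ∈ range (P.length + 1),
      (if P.length < j ∧ (P ++ [x]).getD j 0 < (P ++ [x]).getD P.length 0 then 1 else 0) = 0 :=
    sum_eq_zero fun j hj => if_neg fun h => by simp at hj; omega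
  rw [hlast, add_zero, ← sum_add_distrib]
  refine sum_congr rfl fun i hi => ?_
  rw [mem_range] at hi
  rw [sum_range_succ]
  congr 1
  · refine sum_congr rfl fun j hj => ?_
    rw [mem_range] at hj
    rw [List.getD_append _ _ _ _ hi, List.getD_append _ _ _ _ hj]
  · rw [List.getD_append _ _ _ _ hi, List.getD_append_right _ _ _ _ le_rfl]
    simp [hi]

lemma length_filter_le_range (m n : ℕ) : ((List.range n).filter (m ≤ ·)).length = n - m := by
  induction n with
  | zero => simp
  | succ n ih => by_cases h : m ≤ n <;> simp [List.range_succ, h, ih] <;> omega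

section MissingOne

variable {l : List ℕ} {r c : ℕ}

lemma toFinset_eq_erase_of_notMem (hnd : l.Nodup) (hlen : l.length = r - 1)
    (hmem : ∀ x ∈ l, x ∈ Icc 1 r) (hc : c ∈ Icc 1 r) (hcl : c ∉ l) :
    l.toFinset = (Icc 1 r).erase c := by
  refine eq_of_subset_of_card_le (fun x hx => ?_) ?_
  · rw [List.mem_toFinset] at hx
    exact mem_erase.mpr ⟨fun h => hcl (h ▸ hx), hmem x hx⟩
  · rw [card_erase_of_mem hc, Nat.card_Icc, List.toFinset_card_of_nodup hnd, hlen,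
      Nat.add_sub_cancel]

lemma mergeSort_eq_of_toFinset_eq_erase (hnd : l.Nodup) (hl : l.toFinset = (Icc 1 r).erase c)
    (hc : c ∈ Icc 1 r) :
    l.mergeSort (· ≤ ·) = List.range' 1 (c - 1) ++ List.range' (c + 1) (r - c) := by
  rw [mem_Icc] at hc
  have hsorted : (List.range' 1 (c - 1) ++ List.range' (c + 1) (r - c)).Pairwise (· < ·) := by
    refine List.pairwise_append.mpr ⟨List.pairwise_lt_range' _, List.pairwise_lt_range' _, ?_⟩
    intro x hx y hy
    rw [List.mem_range'_1] at hx hy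
    omega
  have hperm : l.Perm (List.range' 1 (c - 1) ++ List.range' (c + 1) (r - c)) := by
    refine List.perm_of_nodup_nodup_toFinset_eq hnd hsorted.nodup ?_
    ext x
    simp only [hl, mem_erase, mem_Icc, List.toFinset_append, mem_union, List.mem_toFinset,
      List.mem_range'_1]
    omega
  exact ((List.mergeSort_perm l _).trans hperm).eq_of_pairwise' (List.pairwise_mergeSort' _ l)
    (hsorted.imp le_of_lt)

lemma mismatchCount_eq_of_toFinset_eq_erase (hnd : l.Nodup)
    (hl : l.toFinset = (Icc 1 r).erase c) (hc : c ∈ Icc 1 r) : mismatchCount l = r - c := by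
  have hlen : l.length = r - 1 := by
    rw [← List.toFinset_card_of_nodup hnd, hl, card_erase_of_mem hc, Nat.card_Icc,
      Nat.add_sub_cancel]
  rw [mismatchCount, mergeSort_eq_of_toFinset_eq_erase hnd hl hc, hlen]
  rw [mem_Icc] at hc
  have hmismatch : ∀ i ∈ List.range (r - 1),
      decide ((List.range' 1 (c - 1) ++ List.range' (c + 1) (r - c)).getD i 0 ≠ i + 1)
        = decide (c - 1 ≤ i) := by
    intro i hi
    rw [List.mem_range] at hi
    by_cases hic : i < c - 1
    · rw [List.getD_append _ _ _ _ (by simpa using hic),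
        List.getD_eq_getElem _ _ (by simpa using hic), List.getElem_range']
      simp only [ne_eq, decide_eq_decide]
      omega
    · rw [List.getD_append_right _ _ _ _ (by simp; omega)]
      simp only [List.length_range']
      rw [List.getD_eq_getElem _ _ (by simp; omega), List.getElem_range']
      simp only [ne_eq, decide_eq_decide]
      omega
  rw [List.filter_congr hmismatch, length_filter_le_range]
  omega

lemma signatureOf_append_singleton {P : List ℕ} {x : ℕ} (hnd : (P ++ [x]).Nodup)
    (hl : (P ++ [x]).toFinset = (Icc 1 r).erase c) (hc : c ∈ Icc 1 r) :
    signatureOf (P ++ [x])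
      = (-1) ^ (inversionCount P + #{y ∈ (Icc 1 r).erase c | x < y} + (r - c)) := by
  have hcount : P.countP (x < ·) = #{y ∈ (Icc 1 r).erase c | x < y} := by
    calc P.countP (x < ·) = ((P ++ [x]).filter (x < ·)).length := by
          simp [List.countP_eq_length_filter]
      _ = #((P ++ [x]).filter (x < ·)).toFinset :=
          (List.toFinset_card_of_nodup (hnd.filter _)).symm
      _ = #{y ∈ (Icc 1 r).erase c | x < y} := by
          rw [List.toFinset_filter, hl]
          simp only [decide_eq_true_eq]
  rw [signatureOf, inversionCount_append_singleton, hcount,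
    mismatchCount_eq_of_toFinset_eq_erase hnd hl hc]

lemma signatureOf_append_add_signatureOf_append {P : List ℕ} {a b : ℕ} (hab : a ≠ b)
    (hlen : (P ++ [a]).length = r - 1) (hnd₁ : (P ++ [a]).Nodup) (hnd₂ : (P ++ [b]).Nodup)
    (hmem₁ : ∀ x ∈ P ++ [a], x ∈ Icc 1 r) (hmem₂ : ∀ x ∈ P ++ [b], x ∈ Icc 1 r) :
    signatureOf (P ++ [a]) + signatureOf (P ++ [b]) = 0 := by
  wlog hlt : a < b generalizing a b
  · rw [add_comm]
    exact this hab.symm (by simpa using hlen) hnd₂ hnd₁ hmem₂ hmem₁ (by omega)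
  have ha := hmem₁ a (by simp)
  have hb := hmem₂ b (by simp)
  have hb₁ : b ∉ P ++ [a] := by simpa [hab.symm] using (List.nodup_append_comm.mp hnd₂).notMem
  have ha₂ : a ∉ P ++ [b] := by simpa [hab] using (List.nodup_append_comm.mp hnd₁).notMem
  rw [signatureOf_append_singleton hnd₁ (toFinset_eq_erase_of_notMem hnd₁ hlen hmem₁ hb hb₁) hb,
    signatureOf_append_singleton hnd₂
      (toFinset_eq_erase_of_notMem hnd₂ (by simpa using hlen) hmem₂ ha ha₂) ha]
  rw [mem_Icc] at ha hb
  have hIoc (x : ℕ) : {y ∈ Icc 1 r | x < y} = Ioc x r := by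
    ext
    simp only [mem_filter, mem_Icc, mem_Ioc]
    omega
  have hcount₁ : #{y ∈ (Icc 1 r).erase b | a < y} = r - a - 1 := by
    rw [filter_erase, hIoc, card_erase_of_mem (by simp; omega), Nat.card_Ioc]
  have hcount₂ : #{y ∈ (Icc 1 r).erase a | b < y} = r - b := by
    rw [filter_erase, hIoc, erase_eq_of_notMem (by simp; omega), Nat.card_Ioc]
  rw [hcount₁, hcount₂, show inversionCount P + (r - b) + (r - a)
    = inversionCount P + (r - a - 1) + (r - b) + 1 by omega, pow_succ]
  ring

end MissingOne

/-- Two sequences in `S^r_{r-1}` agreeing except in the last entry have opposite signatures. -/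
theorem stmt6 (r : ℕ) (l₁ l₂ : List ℕ)
    (hlen₁ : l₁.length = r - 1) (hlen₂ : l₂.length = r - 1)
    (hnd₁ : l₁.Nodup) (hnd₂ : l₂.Nodup)
    (hmem₁ : ∀ x ∈ l₁, x ∈ Finset.Icc 1 r) (hmem₂ : ∀ x ∈ l₂, x ∈ Finset.Icc 1 r)
    (hagree : l₁.take (r - 2) = l₂.take (r - 2))
    (hlast : l₁.getLast? ≠ l₂.getLast?) :
    signatureOf l₁ + signatureOf l₂ = 0 := by
  rcases l₁.eq_nil_or_concat' with rfl | ⟨P₁, a, rfl⟩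
  · obtain rfl := List.length_eq_zero_iff.mp (hlen₂.trans hlen₁.symm)
    exact absurd rfl hlast
  rcases l₂.eq_nil_or_concat' with rfl | ⟨P₂, b, rfl⟩
  · simp at hlen₁ hlen₂
    omega
  obtain rfl : P₁ = P₂ := by
    have hP₁ : P₁.length = r - 2 := by simp at hlen₁; omega
    have hP₂ : P₂.length = r - 2 := by simp at hlen₂; omega
    rwa [List.take_left' hP₁, List.take_left' hP₂] at hagree
  exact signatureOf_append_add_signatureOf_append (by simpa using hlast) hlen₁ hnd₁ hnd₂ hmem₁
    hmem₂
end

section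
/- Let H = (ℤ/p)^r act on a p'-group K, let G = K ⋊ H, and let k₁, k₂ ∈ K satisfy k₁Hk₁⁻¹ = k₂Hk₂⁻¹. Then for every subgroup I ≤ H, we have k₁Ik₁⁻¹ = k₂Ik₂⁻¹. -/
/-!
If `k₁ H k₁⁻¹ = k₂ H k₂⁻¹`, then `k = k₂⁻¹ k₁ ∈ K` normalizes `H`, so for `h ∈ H` the commutator
`⁅k, h⁆` lies in `H` (as `k h k⁻¹ ∈ H`) and in `K` (as `K` is normal), hence in `K ⊓ H = ⊥`.
Thus `k` centralizes `H`, so it normalizes every `I ≤ H`, which says exactly that `k₁ I k₁⁻¹ = k₂ I k₂⁻¹`.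
-/

namespace Subgroup

variable {G : Type*} [Group G]

theorem map_conj_eq_map_conj_iff {I : Subgroup G} {a b : G} :
    I.map (MulAut.conj a).toMonoidHom = I.map (MulAut.conj b).toMonoidHom ↔
      b⁻¹ * a ∈ normalizer (I : Set G) := by
  have hfactor : I.map (MulAut.conj a).toMonoidHom =
      (I.map (MulAut.conj (b⁻¹ * a)).toMonoidHom).map (MulAut.conj b).toMonoidHom := by
    rw [map_map]
    congr 1
    ext g
    simp [mul_assoc]
  rw [hfactor, (map_injective (MulAut.conj b).injective).eq_iff, mem_normalizer_iff_map_conj_eq]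
  rfl

open scoped commutatorElement in
theorem mem_centralizer_of_mem_normalizer_of_inf_eq_bot {K H : Subgroup G} [K.Normal]
    (hKH : K ⊓ H = ⊥) {k : G} (hk : k ∈ K) (hkH : k ∈ normalizer (H : Set G)) :
    k ∈ centralizer (H : Set G) := by
  refine mem_centralizer_iff_commutator_eq_one'.mpr fun h hh ↦ ?_
  have hcK : ⁅k, h⁆ ∈ K := by
    simpa [commutatorElement_def, mul_assoc] using
      K.mul_mem hk (‹K.Normal›.conj_mem _ (K.inv_mem hk) h)
  have hcH : ⁅k, h⁆ ∈ H := H.mul_mem ((hkH h).mp hh) (H.inv_mem hh)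
  rw [← mem_bot, ← hKH]
  exact ⟨hcK, hcH⟩

end Subgroup

theorem stmt8_general {G : Type*} [Group G]
    (K H : Subgroup G) (hKn : K.Normal) (hdisj : K ⊓ H = ⊥)
    (k₁ k₂ : G) (hk₁ : k₁ ∈ K) (hk₂ : k₂ ∈ K)
    (hconj : H.map (MulAut.conj k₁).toMonoidHom = H.map (MulAut.conj k₂).toMonoidHom) :
    ∀ I : Subgroup G, I ≤ H →
      I.map (MulAut.conj k₁).toMonoidHom = I.map (MulAut.conj k₂).toMonoidHom := by
  intro I hI
  have hkK : k₂⁻¹ * k₁ ∈ K := K.mul_mem (K.inv_mem hk₂) hk₁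
  have hkH : k₂⁻¹ * k₁ ∈ Subgroup.normalizer (H : Set G) :=
    Subgroup.map_conj_eq_map_conj_iff.mp hconj
  have hcent : k₂⁻¹ * k₁ ∈ Subgroup.centralizer (H : Set G) :=
    Subgroup.mem_centralizer_of_mem_normalizer_of_inf_eq_bot hdisj hkK hkH
  exact Subgroup.map_conj_eq_map_conj_iff.mpr
    (Subgroup.centralizer_le_normalizer _ (Subgroup.centralizer_le hI hcent))

/-- In a semidirect product `G = K ⋊ H` with `H` elementary abelian of order `p^r` and `K` a
`p'`-group, if `k₁, k₂ ∈ K` give the same conjugate of `H`, then they give the same conjugate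
of every subgroup `I ≤ H`. -/
theorem stmt8 {G : Type*} [Group G] [Finite G] (p r : ℕ) [Fact p.Prime]
    (K H : Subgroup G) (hKn : K.Normal) (hdisj : K ⊓ H = ⊥) (hsup : K ⊔ H = ⊤)
    (hHcard : Nat.card H = p ^ r) (helem : ∀ x ∈ H, x ^ p = 1)
    (hHab : ∀ a ∈ H, ∀ b ∈ H, a * b = b * a)
    (hK' : ¬ p ∣ Nat.card K)
    (k₁ k₂ : G) (hk₁ : k₁ ∈ K) (hk₂ : k₂ ∈ K)
    (hconj : H.map (MulAut.conj k₁).toMonoidHom = H.map (MulAut.conj k₂).toMonoidHom) :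
    ∀ I : Subgroup G, I ≤ H →
      I.map (MulAut.conj k₁).toMonoidHom = I.map (MulAut.conj k₂).toMonoidHom :=
  stmt8_general K H hKn hdisj k₁ k₂ hk₁ hk₂ hconj
end

section
/- Let G = K ⋊ H with H = (ℤ/p)^r acting faithfully on a p'-group K with |K| = q₁^{e₁}⋯q_l^{e_l} (distinct primes q_i ≠ p). If r < q_i for all i, then for any r linearly independent hyperplanes H₁,…,H_r of H with N(H_i) > 1, one has Σ_{i=1}^r 1/N(H_i) < 1, i.e., Σ_{i=1}^r |K|/|C_K(H_i)| < |K|/|C_K(H)|. -/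
/-! Each `N(Hᵢ) = |C_K(Hᵢ) : C_K(H)|` is a divisor of `|K|` larger than `1`, so its least prime
factor, and hence `N(Hᵢ)` itself, exceeds `r`. Thus every summand `|K : C_K(Hᵢ)|` is at most
`|K : C_K(H)| / (r + 1)`, and `r` of them add up to less than `|K : C_K(H)|`. -/

theorem Nat.lt_of_forall_prime_dvd_lt {n r : ℕ} (h : ∀ q : ℕ, q.Prime → q ∣ n → r < q)
    (hn0 : n ≠ 0) (hn1 : n ≠ 1) : r < n :=
  (h _ (Nat.minFac_prime hn1) (Nat.minFac_dvd n)).trans_le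
    (Nat.minFac_le (Nat.pos_of_ne_zero hn0))

theorem Finset.sum_lt_of_forall_card_succ_mul_le {ι : Type*} (s : Finset ι) (f : ι → ℕ)
    {M : ℕ} (hM : 0 < M) (h : ∀ i ∈ s, (s.card + 1) * f i ≤ M) : ∑ i ∈ s, f i < M := by
  have hsum : (s.card + 1) * ∑ i ∈ s, f i ≤ s.card * M := by
    rw [Finset.mul_sum]
    calc ∑ i ∈ s, (s.card + 1) * f i ≤ ∑ _i ∈ s, M := Finset.sum_le_sum h
      _ = s.card * M := by rw [Finset.sum_const, smul_eq_mul]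
  by_contra! hle
  nlinarith

namespace Subgroup

variable {G : Type*} [Group G]

theorem relIndex_eq_card_div {A K : Subgroup G} [Finite A] (hAK : A ≤ K) :
    A.relIndex K = Nat.card K / Nat.card A := by
  have hcard := relIndex_mul_relIndex _ _ _ bot_le hAK
  rw [relIndex_bot_left, relIndex_bot_left] at hcard
  rw [← hcard, Nat.mul_div_cancel_left _ Nat.card_pos]

variable [Finite G]

theorem lt_relIndex_of_lt {A B K : Subgroup G} {r : ℕ} (hAB : A < B) (hBK : B ≤ K)
    (hprimes : ∀ q : ℕ, q.Prime → q ∣ Nat.card K → r < q) : r < A.relIndex B :=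
  Nat.lt_of_forall_prime_dvd_lt
    (fun q hq hdvd ↦
      hprimes q hq (hdvd.trans ((relIndex_dvd_card A B).trans (card_dvd_of_le hBK))))
    (A.subgroupOf B).index_ne_zero_of_finite (mt relIndex_eq_one.mp (not_le_of_gt hAB))

theorem succ_mul_relIndex_le {A B K : Subgroup G} {r : ℕ} (hAB : A < B) (hBK : B ≤ K)
    (hprimes : ∀ q : ℕ, q.Prime → q ∣ Nat.card K → r < q) :
    (r + 1) * B.relIndex K ≤ A.relIndex K := by
  rw [← relIndex_mul_relIndex _ _ _ hAB.le hBK]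
  exact Nat.mul_le_mul_right _ (lt_relIndex_of_lt hAB hBK hprimes)

end Subgroup

theorem stmt10_general {G : Type*} [Group G] [Finite G] (r : ℕ)
    (K H : Subgroup G)
    (hprimes : ∀ q : ℕ, q.Prime → q ∣ Nat.card K → r < q)
    (Hs : Fin r → Subgroup G)
    (hbig : ∀ i, Subgroup.centralizer (H : Set G) ⊓ K <
      Subgroup.centralizer ((Hs i : Subgroup G) : Set G) ⊓ K) :
    ∑ i : Fin r,
        Nat.card K / Nat.card ↥(Subgroup.centralizer ((Hs i : Subgroup G) : Set G) ⊓ K) <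
      Nat.card K / Nat.card ↥(Subgroup.centralizer (H : Set G) ⊓ K) := by
  simp only [← Subgroup.relIndex_eq_card_div inf_le_right]
  have hpos : 0 < (Subgroup.centralizer (H : Set G) ⊓ K).relIndex K :=
    Nat.pos_of_ne_zero Subgroup.index_ne_zero_of_finite
  refine Finset.sum_lt_of_forall_card_succ_mul_le _ _ hpos fun i _ ↦ ?_
  rw [Finset.card_univ, Fintype.card_fin]
  exact Subgroup.succ_mul_relIndex_le (hbig i) inf_le_right hprimes

/-- Let `G = K ⋊ H` with `H` elementary abelian of order `p^r` acting faithfully on the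
`p'`-group `K`, and suppose every prime `q` dividing `|K|` satisfies `r < q`. Then for any `r`
linearly independent hyperplanes `H₁,…,H_r` of `H` with `N(Hᵢ) > 1` (i.e.
`C_K(H) ⊊ C_K(Hᵢ)`), one has `Σᵢ |K|/|C_K(Hᵢ)| < |K|/|C_K(H)|`. -/
theorem stmt10 {G : Type*} [Group G] [Finite G] (p r : ℕ) [Fact p.Prime]
    (K H : Subgroup G) (hKn : K.Normal) (hdisj : K ⊓ H = ⊥) (hsup : K ⊔ H = ⊤)
    (hHcard : Nat.card H = p ^ r) (helem : ∀ x ∈ H, x ^ p = 1)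
    (hHab : ∀ a ∈ H, ∀ b ∈ H, a * b = b * a)
    (hK' : ¬ p ∣ Nat.card K)
    (hfaithful : ∀ h ∈ H, (∀ k ∈ K, h * k * h⁻¹ = k) → h = 1)
    (hprimes : ∀ q : ℕ, q.Prime → q ∣ Nat.card K → r < q)
    (Hs : Fin r → Subgroup G) (hHsH : ∀ i, Hs i ≤ H)
    (hHsidx : ∀ i, (Hs i).relIndex H = p) (hindep : (⨅ i, Hs i) ⊓ H = ⊥)
    (hbig : ∀ i, Subgroup.centralizer (H : Set G) ⊓ K <
      Subgroup.centralizer ((Hs i : Subgroup G) : Set G) ⊓ K) :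
    ∑ i : Fin r,
        Nat.card K / Nat.card ↥(Subgroup.centralizer ((Hs i : Subgroup G) : Set G) ⊓ K) <
      Nat.card K / Nat.card ↥(Subgroup.centralizer (H : Set G) ⊓ K) :=
  stmt10_general r K H hprimes Hs hbig
end

section
/- Let H be an elementary abelian p-group acting on Y = X^m permuting the factors transitively, I ≤ H, H' = N_H(X), I' = N_I(X), and let k = |H:H'| / |I:I'| be the number of orbits of I on the set of factors. Then C_Y(I) properly contains C_Y(H) if and only if either (k = 1 and C_X(I') > C_X(H')) or (k > 1 and C_X(I') ≠ 1). -/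
/-!
Write `C_Y(K)` for the fixed points of `K ≤ H` on `Y = X^m` and `K_i` for the stabilizer in `K`
of the factor `i`. An element of `C_Y(K)` is determined on the `K`-orbit of a factor `i` by its
value there, which lies in `C_X(K_i)`; conversely every `x ∈ C_X(K_i)` extends, by transport
along `K` and by `1` off that orbit, to an element of `C_Y(K)`.

If `I` is transitive on the factors, evaluation at the first factor therefore turns
`C_Y(H) ⊆ C_Y(I)` into `C_X(H') ⊆ C_X(I')`. Otherwise the extension of some `x ≠ 1` in `C_X(I')`
is trivial on a factor, hence not `H`-fixed; conversely, as `H` is abelian it preserves `C_Y(I)`,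
so a nontrivial element of `C_Y(I)` can be moved to one that is nontrivial on the first factor.

By orbit–stabilizer, `|H:H'| = m` and `|I:I'|` is the length of the `I`-orbit of the first factor.
This length divides `m` because `H'` is normal, so `k = 1` exactly when `I` is transitive.
-/

namespace MulAction

variable {G α : Type*} [Group G] [MulAction G α]

theorem stabilizer_subgroup_eq_subgroupOf (K : Subgroup G) (a : α) :
    stabilizer K a = (stabilizer G a).subgroupOf K := by
  ext; rfl

theorem relIndex_stabilizer (K : Subgroup G) (a : α) :
    (stabilizer G a).relIndex K = (orbit K a).ncard := by
  rw [Subgroup.relIndex, ← stabilizer_subgroup_eq_subgroupOf, index_stabilizer]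

theorem orbit_subgroup_eq_univ_iff (K : Subgroup G) (a : α) :
    orbit K a = Set.univ ↔ ∀ b, ∃ g ∈ K, g • a = b := by
  simp [Set.eq_univ_iff_forall, mem_orbit_iff]

variable [Finite α] [IsPretransitive G α]

theorem index_stabilizer_div_relIndex_pos (a : α) (K : Subgroup G) :
    0 < (stabilizer G a).index / (stabilizer G a).relIndex K := by
  rw [index_stabilizer_of_transitive, relIndex_stabilizer, ← Set.ncard_univ]
  exact Nat.div_pos (Set.ncard_le_ncard (Set.subset_univ _))
    ((Set.ncard_pos (Set.toFinite _)).2 ⟨a, mem_orbit_self a⟩)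

theorem index_stabilizer_div_relIndex_eq_one_iff (a : α) [(stabilizer G a).Normal]
    (K : Subgroup G) :
    (stabilizer G a).index / (stabilizer G a).relIndex K = 1 ↔ orbit K a = Set.univ := by
  obtain ⟨t, ht⟩ := Subgroup.relIndex_dvd_index_of_normal (stabilizer G a) K
  rw [index_stabilizer_of_transitive, relIndex_stabilizer, ← Set.ncard_univ] at ht
  have hpos : 0 < (orbit K a).ncard := (Set.ncard_pos (Set.toFinite _)).2 ⟨a, mem_orbit_self a⟩
  rw [index_stabilizer_of_transitive, relIndex_stabilizer, ← Set.ncard_univ, ht,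
    Nat.mul_div_cancel_left _ hpos]
  constructor
  · rintro rfl
    exact Set.eq_of_subset_of_ncard_le (Set.subset_univ _) (by rw [ht, mul_one])
  · intro h
    rw [h] at ht hpos
    exact (Nat.mul_eq_left hpos.ne' |>.1 ht.symm)

end MulAction

section FactorPermutation

variable {ι X : Type*} [Group X]

def PermutesFactors {H : Type*} [Group H] (φ : H →* MulAut (ι → X)) (ρ : H →* Equiv.Perm ι) :
    Prop :=
  ∀ (h : H) (y y' : ι → X) (i : ι), y i = y' i → φ h y (ρ h i) = φ h y' (ρ h i)

namespace PermutesFactors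

section Group

variable {H : Type*} [Group H]

def fixedPoints (φ : H →* MulAut (ι → X)) (K : Subgroup H) : Set (ι → X) :=
  {y | ∀ h ∈ K, φ h y = y}

variable {φ : H →* MulAut (ι → X)} {ρ : H →* Equiv.Perm ι}

theorem fixedPoints_anti {K L : Subgroup H} (hKL : K ≤ L) :
    fixedPoints φ L ⊆ fixedPoints φ K :=
  fun _ hy h hK => hy h (hKL hK)

theorem one_mem_fixedPoints (K : Subgroup H) : 1 ∈ fixedPoints φ K :=
  fun _ _ => map_one _

variable [DecidableEq ι]

def factorHom (φ : H →* MulAut (ι → X)) (ρ : H →* Equiv.Perm ι) (h : H) (i : ι) : X →* X :=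
  (Pi.evalMonoidHom (fun _ => X) (ρ h i)).comp
    ((φ h : (ι → X) ≃* (ι → X)).toMonoidHom.comp (MonoidHom.mulSingle (fun _ => X) i))

@[simp]
theorem factorHom_apply (h : H) (i : ι) (x : X) :
    factorHom φ ρ h i x = φ h (Pi.mulSingle i x) (ρ h i) := rfl

/-- The paper's `C_X(K_i)`: `factorHom φ ρ h i` is the action of `h ∈ K_i` on the factor `i`. -/
def factorFixedPoints (φ : H →* MulAut (ι → X)) (ρ : H →* Equiv.Perm ι) (K : Subgroup H)
    (i : ι) : Set X :=
  {x | ∀ h ∈ K, ρ h i = i → factorHom φ ρ h i x = x}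

theorem one_mem_factorFixedPoints (K : Subgroup H) (i : ι) : 1 ∈ factorFixedPoints φ ρ K i :=
  fun _ _ _ => map_one _

theorem factorFixedPoints_anti {K L : Subgroup H} (hKL : K ≤ L) (i : ι) :
    factorFixedPoints φ ρ L i ⊆ factorFixedPoints φ ρ K i :=
  fun _ hx h hK => hx h (hKL hK)

open Classical in
/-- Independent of the choice of `a ∈ K` with `ρ a i = j` when `x ∈ C_X(K_i)`
(`induce_apply`). -/
noncomputable def induce (φ : H →* MulAut (ι → X)) (ρ : H →* Equiv.Perm ι) (K : Subgroup H)
    (i : ι) (x : X) : ι → X := fun j =>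
  if hj : ∃ a ∈ K, ρ a i = j then factorHom φ ρ hj.choose i x else 1

theorem induce_apply_of_forall_ne {K : Subgroup H} {i j : ι} {x : X}
    (hj : ∀ a ∈ K, ρ a i ≠ j) : induce φ ρ K i x j = 1 := by
  rw [induce, dif_neg (show ¬∃ a ∈ K, ρ a i = j by simpa using hj)]

variable (hφ : PermutesFactors φ ρ)
include hφ

theorem apply_apply (h : H) (y : ι → X) (i : ι) :
    φ h y (ρ h i) = factorHom φ ρ h i (y i) :=
  hφ h y (Pi.mulSingle i (y i)) i (by simp)

theorem factorHom_mul_apply (g h : H) (i : ι) (x : X) :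
    factorHom φ ρ (g * h) i x = factorHom φ ρ g (ρ h i) (factorHom φ ρ h i x) := by
  rw [factorHom_apply h, ← apply_apply hφ]
  simp

theorem factorHom_injective (h : H) (i : ι) : Function.Injective (factorHom φ ρ h i) :=
  Function.LeftInverse.injective (g := factorHom φ ρ h⁻¹ (ρ h i)) fun x => by
    rw [← factorHom_mul_apply hφ]; simp

theorem apply_eq_self_iff (h : H) (y : ι → X) :
    φ h y = y ↔ ∀ j, factorHom φ ρ h j (y j) = y (ρ h j) := by
  rw [funext_iff, ← (ρ h).forall_congr_right]
  simp only [apply_apply hφ]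

theorem apply_mulSingle_eq_self_iff {h : H} {i : ι} (hh : ρ h i = i) (x : X) :
    φ h (Pi.mulSingle i x) = Pi.mulSingle i x ↔ factorHom φ ρ h i x = x := by
  rw [apply_eq_self_iff hφ]
  refine ⟨fun hx => by simpa [hh] using hx i, fun hx j => ?_⟩
  rcases eq_or_ne j i with rfl | hj
  · simp [hh, hx]
  · have : ρ h j ≠ i := hh ▸ (ρ h).injective.ne hj
    simp [Pi.mulSingle_eq_of_ne hj, Pi.mulSingle_eq_of_ne this]

variable {K : Subgroup H} {i : ι}

theorem factorHom_apply_of_mem_fixedPoints {y : ι → X} (hy : y ∈ fixedPoints φ K) {a : H}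
    (ha : a ∈ K) (i : ι) : factorHom φ ρ a i (y i) = y (ρ a i) :=
  (apply_eq_self_iff hφ a y).1 (hy a ha) i

theorem apply_mem_factorFixedPoints {y : ι → X} (hy : y ∈ fixedPoints φ K) (i : ι) :
    y i ∈ factorFixedPoints φ ρ K i := fun a ha hai => by
  simpa only [hai] using factorHom_apply_of_mem_fixedPoints hφ hy ha i

theorem apply_eq_of_mem_fixedPoints {y z : ι → X} (hy : y ∈ fixedPoints φ K)
    (hz : z ∈ fixedPoints φ K) (hyz : y i = z i) {a : H} (ha : a ∈ K) :
    y (ρ a i) = z (ρ a i) := by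
  rw [← factorHom_apply_of_mem_fixedPoints hφ hy ha, hyz,
    factorHom_apply_of_mem_fixedPoints hφ hz ha]

theorem factorHom_eq_of_mem_factorFixedPoints {x : X} (hx : x ∈ factorFixedPoints φ ρ K i)
    {a b : H} (ha : a ∈ K) (hb : b ∈ K) (hab : ρ a i = ρ b i) :
    factorHom φ ρ a i x = factorHom φ ρ b i x := by
  have hc : ρ (b⁻¹ * a) i = i := by simp [hab]
  rw [← mul_inv_cancel_left b a, factorHom_mul_apply hφ, hc,
    hx _ (K.mul_mem (K.inv_mem hb) ha) hc]

theorem induce_apply {x : X} (hx : x ∈ factorFixedPoints φ ρ K i) {a : H} (ha : a ∈ K) :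
    induce φ ρ K i x (ρ a i) = factorHom φ ρ a i x := by
  have hj : ∃ b ∈ K, ρ b i = ρ a i := ⟨a, ha, rfl⟩
  rw [induce, dif_pos hj]
  exact factorHom_eq_of_mem_factorFixedPoints hφ hx hj.choose_spec.1 ha hj.choose_spec.2

theorem induce_apply_self {x : X} (hx : x ∈ factorFixedPoints φ ρ K i) :
    induce φ ρ K i x i = x := by
  simpa using induce_apply hφ hx K.one_mem

theorem induce_mem_fixedPoints {x : X} (hx : x ∈ factorFixedPoints φ ρ K i) :
    induce φ ρ K i x ∈ fixedPoints φ K := by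
  intro h hh
  rw [apply_eq_self_iff hφ]
  intro j
  by_cases hj : ∃ a ∈ K, ρ a i = j
  · obtain ⟨a, ha, rfl⟩ := hj
    rw [induce_apply hφ hx ha, ← factorHom_mul_apply hφ, ← Equiv.Perm.mul_apply, ← map_mul,
      induce_apply hφ hx (K.mul_mem hh ha)]
  · push Not at hj
    have hj' : ∀ a ∈ K, ρ a i ≠ ρ h j := fun a ha hai =>
      hj (h⁻¹ * a) (K.mul_mem (K.inv_mem hh) ha) (by simp [hai])
    rw [induce_apply_of_forall_ne hj, induce_apply_of_forall_ne hj', map_one]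

theorem setOf_apply_mulSingle_eq_self {S : Subgroup H} (hS : ∀ h, h ∈ S ↔ h ∈ K ∧ ρ h i = i) :
    {x : X | ∀ h ∈ S, φ h (Pi.mulSingle i x) = Pi.mulSingle i x} = factorFixedPoints φ ρ K i := by
  ext x
  simp only [Set.mem_ofPred_eq, factorFixedPoints, hS, and_imp]
  exact forall₃_congr fun h _ hh => apply_mulSingle_eq_self_iff hφ hh x

theorem fixedPoints_ssubset_iff_of_forall_exists {L : Subgroup H} (hKL : K ≤ L)
    (hK : ∀ j, ∃ a ∈ K, ρ a i = j) :
    fixedPoints φ L ⊂ fixedPoints φ K ↔ factorFixedPoints φ ρ L i ⊂ factorFixedPoints φ ρ K i := by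
  rw [Set.ssubset_iff_of_subset (fixedPoints_anti hKL),
    Set.ssubset_iff_of_subset (factorFixedPoints_anti hKL i)]
  constructor
  · rintro ⟨y, hyK, hyL⟩
    refine ⟨y i, apply_mem_factorFixedPoints hφ hyK i, fun hL => hyL ?_⟩
    have hz := induce_mem_fixedPoints hφ hL
    convert hz using 1
    funext j
    obtain ⟨a, ha, rfl⟩ := hK j
    exact apply_eq_of_mem_fixedPoints hφ hyK (fixedPoints_anti hKL hz)
      (induce_apply_self hφ hL).symm ha
  · rintro ⟨x, hxK, hxL⟩
    refine ⟨induce φ ρ K i x, induce_mem_fixedPoints hφ hxK, fun hL => hxL ?_⟩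
    simpa only [induce_apply_self hφ hxK] using apply_mem_factorFixedPoints hφ hL i

end Group

section CommGroup

variable {H : Type*} [CommGroup H] {φ : H →* MulAut (ι → X)}

theorem apply_mem_fixedPoints {K : Subgroup H} {y : ι → X} (hy : y ∈ fixedPoints φ K) (g : H) :
    φ g y ∈ fixedPoints φ K := fun h hK => by
  rw [← MulAut.mul_apply, ← map_mul, mul_comm, map_mul, MulAut.mul_apply, hy h hK]

variable [DecidableEq ι] {ρ : H →* Equiv.Perm ι}

theorem fixedPoints_top_ssubset_iff_of_not_forall_exists (hφ : PermutesFactors φ ρ)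
    (htrans : ∀ j j', ∃ h, ρ h j = j') {K : Subgroup H} {i : ι}
    (hK : ¬∀ j, ∃ a ∈ K, ρ a i = j) :
    fixedPoints φ ⊤ ⊂ fixedPoints φ K ↔ factorFixedPoints φ ρ K i ≠ {1} := by
  rw [Set.ssubset_iff_of_subset (fixedPoints_anti le_top), Ne, Set.eq_singleton_iff_unique_mem,
    and_iff_right (one_mem_factorFixedPoints K i)]
  push Not
  constructor
  · rintro ⟨y, hyK, hytop⟩
    obtain ⟨j, hj⟩ : ∃ j, y j ≠ 1 := by
      by_contra! hy
      exact hytop (funext hy ▸ one_mem_fixedPoints ⊤)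
    obtain ⟨g, hg⟩ := htrans j i
    refine ⟨φ g y i, apply_mem_factorFixedPoints hφ (apply_mem_fixedPoints hyK g) i, ?_⟩
    rw [← hg, apply_apply hφ]
    exact (map_ne_one_iff _ (factorHom_injective hφ g j)).2 hj
  · rintro ⟨x, hx, hx1⟩
    push Not at hK
    obtain ⟨j, hj⟩ := hK
    refine ⟨induce φ ρ K i x, induce_mem_fixedPoints hφ hx, fun htop => hx1 ?_⟩
    obtain ⟨h, hh⟩ := htrans j i
    have := apply_eq_of_mem_fixedPoints hφ htop (one_mem_fixedPoints ⊤)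
      (induce_apply_of_forall_ne hj) (Subgroup.mem_top h)
    rwa [hh, induce_apply_self hφ hx] at this

end CommGroup

end PermutesFactors

end FactorPermutation

open PermutesFactors

theorem stmt13_general (m : ℕ) [NeZero m]
    {X : Type*} [Group X]
    {H : Type*} [CommGroup H]
    (φ : H →* MulAut (Fin m → X)) (ρ : H →* Equiv.Perm (Fin m))
    (hfactor : ∀ (h : H) (y y' : Fin m → X) (i : Fin m),
      y i = y' i → φ h y (ρ h i) = φ h y' (ρ h i))
    (htrans : ∀ i j : Fin m, ∃ h : H, ρ h i = j)
    (H' : Subgroup H) (hH' : ∀ h : H, h ∈ H' ↔ ρ h 0 = 0)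
    (I : Subgroup H) :
    ({y : Fin m → X | ∀ h : H, φ h y = y} ⊂ {y : Fin m → X | ∀ h ∈ I, φ h y = y}) ↔
      ((H'.index / H'.relIndex I = 1 ∧
          {x : X | ∀ h ∈ H', φ h (Pi.mulSingle 0 x) = Pi.mulSingle 0 x} ⊂
            {x : X | ∀ h ∈ I ⊓ H', φ h (Pi.mulSingle 0 x) = Pi.mulSingle 0 x}) ∨
        (1 < H'.index / H'.relIndex I ∧
          {x : X | ∀ h ∈ I ⊓ H', φ h (Pi.mulSingle 0 x) = Pi.mulSingle 0 x} ≠ {1})) := by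
  let _ : MulAction H (Fin m) := MulAction.compHom _ ρ
  have : MulAction.IsPretransitive H (Fin m) := ⟨htrans⟩
  have hstab : MulAction.stabilizer H (0 : Fin m) = H' := by ext h; exact (hH' h).symm
  have hCY : {y : Fin m → X | ∀ h : H, φ h y = y} = fixedPoints φ ⊤ := by simp [fixedPoints]
  rw [hCY, setOf_apply_mulSingle_eq_self hfactor (K := ⊤) (by simpa using hH'),
    setOf_apply_mulSingle_eq_self hfactor (K := I) (by simp [Subgroup.mem_inf, hH']), ← hstab]
  change fixedPoints φ ⊤ ⊂ fixedPoints φ I ↔ _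
  have hk_pos := MulAction.index_stabilizer_div_relIndex_pos (0 : Fin m) I
  have hk_one := (MulAction.index_stabilizer_div_relIndex_eq_one_iff (0 : Fin m) I).trans
    (MulAction.orbit_subgroup_eq_univ_iff I 0)
  by_cases hI : ∀ j, ∃ a ∈ I, ρ a 0 = j
  · rw [fixedPoints_ssubset_iff_of_forall_exists hfactor le_top hI, hk_one.2 hI]
    simp
  · rw [fixedPoints_top_ssubset_iff_of_not_forall_exists hfactor htrans hI]
    have hk_ne_one := mt hk_one.1 hI
    rw [or_iff_right (fun h => hk_ne_one h.1), and_iff_right (by omega)]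

/-- Let the elementary abelian `p`-group `H` act on `Y = X^m` by automorphisms permuting the
`m` factors transitively, `I ≤ H`, `H' = N_H(X)`, `I' = N_I(X) = I ⊓ H'`, and let
`k = |H:H'|/|I:I'|` be the number of `I`-orbits on the factors. Then `C_Y(I) ⊋ C_Y(H)` iff
either (`k = 1` and `C_X(I') ⊋ C_X(H')`) or (`k > 1` and `C_X(I') ≠ 1`). -/
theorem stmt13 (p m : ℕ) [Fact p.Prime] [NeZero m]
    {X : Type*} [Group X] [Finite X]
    {H : Type*} [CommGroup H] [Finite H] (helem : ∀ h : H, h ^ p = 1)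
    (φ : H →* MulAut (Fin m → X)) (ρ : H →* Equiv.Perm (Fin m))
    (hfactor : ∀ (h : H) (y y' : Fin m → X) (i : Fin m),
      y i = y' i → φ h y (ρ h i) = φ h y' (ρ h i))
    (htrans : ∀ i j : Fin m, ∃ h : H, ρ h i = j)
    (H' : Subgroup H) (hH' : ∀ h : H, h ∈ H' ↔ ρ h 0 = 0)
    (I : Subgroup H) :
    ({y : Fin m → X | ∀ h : H, φ h y = y} ⊂ {y : Fin m → X | ∀ h ∈ I, φ h y = y}) ↔
      ((H'.index / H'.relIndex I = 1 ∧
          {x : X | ∀ h ∈ H', φ h (Pi.mulSingle 0 x) = Pi.mulSingle 0 x} ⊂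
            {x : X | ∀ h ∈ I ⊓ H', φ h (Pi.mulSingle 0 x) = Pi.mulSingle 0 x}) ∨
        (1 < H'.index / H'.relIndex I ∧
          {x : X | ∀ h ∈ I ⊓ H', φ h (Pi.mulSingle 0 x) = Pi.mulSingle 0 x} ≠ {1})) :=
  stmt13_general m φ ρ hfactor htrans H' hH' I
end

section
/- Let G = K ⋊ H with H = (ℤ/p)^r, K a p'-group, and suppose there exist elements c_i ∈ C_K(H_i) \ C_K(H) for i = 1,…,r, where H₁,…,H_r are r linearly independent hyperplanes of H, such that the c_i pairwise commute and c_i ∉ C_K(H) for all i. Then the set S = { (c₁^{δ₁}⋯c_r^{δ_r}) H (c₁^{δ₁}⋯c_r^{δ_r})⁻¹ : δ_i ∈ {0,1} } of conjugates of H has exactly 2^r elements. -/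
/-!
Two of the conjugates can only coincide if the conjugating elements, which lie in `K`, differ by
an element normalising `H`; since `K ∩ H = 1` and `K` is normal, such an element centralises `H`.
If `δ` and `ε` differ at `j`, test this on an element `x ∈ H` lying in every `Hᵢ` with `i ≠ j` but
not in `H_j` (it exists because `r - 1` hyperplanes cut out a subgroup of order at least `p`).
All `cᵢ` with `i ≠ j` commute with `x`, so the two conjugates of `x` are `x` and `c_j x c_j⁻¹`,
whence `c_j` centralises `⟨H_j, x⟩ = H`, a contradiction.
-/

namespace Subgroup

variable {G : Type*} [Group G]

theorem card_le_prod_relIndex_of_iInf_inf_eq_bot {ι : Type*} [Fintype ι] (f : ι → Subgroup G)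
    {H : Subgroup G} (hbot : (⨅ i, f i) ⊓ H = ⊥) : Nat.card H ≤ ∏ i, (f i).relIndex H := by
  rw [← relIndex_bot_left, ← hbot, inf_relIndex_right]
  exact relIndex_iInf_le f

theorem exists_mem_iInf_ne_notMem_of_iInf_inf_eq_bot {p n : ℕ} (hp : 1 < p) {H : Subgroup G}
    (hH : Nat.card H = p ^ n) (f : Fin n → Subgroup G) (hf : ∀ i, (f i).relIndex H = p)
    (hbot : (⨅ i, f i) ⊓ H = ⊥) (j : Fin n) : ∃ x ∈ H, (∀ i ≠ j, x ∈ f i) ∧ x ∉ f j := by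
  have hlt : ∏ i : {i // i ≠ j}, (f i).relIndex H < Nat.card H := by
    simp only [hf]
    rw [Finset.prod_const, Finset.card_univ, Fintype.card_subtype_compl, Fintype.card_subtype_eq,
      Fintype.card_fin, hH]
    exact Nat.pow_lt_pow_right hp (Nat.sub_lt j.pos one_pos)
  obtain ⟨⟨x, hx⟩, hx1⟩ := ne_bot_iff_exists_ne_one.mp fun h =>
    hlt.not_ge (card_le_prod_relIndex_of_iInf_inf_eq_bot _ h)
  obtain ⟨hxInf, hxH⟩ := mem_inf.mp hx
  have hxf : ∀ i ≠ j, x ∈ f i := fun i hi => mem_iInf.mp hxInf ⟨i, hi⟩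
  refine ⟨x, hxH, hxf, fun hxj => hx1 ?_⟩
  have : x ∈ (⨅ i, f i) ⊓ H := by
    refine ⟨mem_iInf.mpr fun i => ?_, hxH⟩
    by_cases hi : i = j
    · exact hi ▸ hxj
    · exact hxf i hi
  simpa [hbot] using this

theorem le_of_relIndex_prime {A L H : Subgroup G} (hp : (A.relIndex H).Prime) (hAL : A ≤ L)
    {x : G} (hxL : x ∈ L) (hxH : x ∈ H) (hxA : x ∉ A) : H ≤ L := by
  have hmul := relIndex_inf_mul_relIndex A L H
  rw [inf_of_le_left hAL] at hmul
  rcases Nat.prime_mul_iff.mp (hmul ▸ hp) with ⟨-, h⟩ | ⟨-, h⟩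
  · exact relIndex_eq_one.mp h
  · exact absurd (relIndex_eq_one.mp h ⟨hxL, hxH⟩) hxA

theorem mem_centralizer_of_relIndex_prime {A H : Subgroup G} (hp : (A.relIndex H).Prime)
    {c x : G} (hcA : c ∈ centralizer (A : Set G)) (hcx : Commute c x) (hxH : x ∈ H)
    (hxA : x ∉ A) : c ∈ centralizer (H : Set G) := by
  have hle : H ≤ centralizer {c} :=
    le_of_relIndex_prime hp (fun y hy => mem_centralizer_singleton_iff.mpr (hcA y hy))
      (mem_centralizer_singleton_iff.mpr hcx.eq.symm) hxH hxA
  exact fun y hy => mem_centralizer_singleton_iff.mp (hle hy)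

theorem conj_eq_of_mem_normal_of_conj_mem {K H : Subgroup G} (hK : K.Normal) (hKH : K ⊓ H = ⊥)
    {d h : G} (hd : d ∈ K) (hh : h ∈ H) (hdh : d * h * d⁻¹ ∈ H) : d * h * d⁻¹ = h := by
  have hcomm : d * h * d⁻¹ * h⁻¹ ∈ K ⊓ H := by
    refine ⟨?_, H.mul_mem hdh (H.inv_mem hh)⟩
    have := K.mul_mem hd (hK.conj_mem _ (K.inv_mem hd) h)
    rwa [← mul_assoc, ← mul_assoc] at this
  rwa [hKH, mem_bot, mul_inv_eq_one] at hcomm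

theorem conj_eq_conj_of_map_conj_eq {K H : Subgroup G} (hK : K.Normal) (hKH : K ⊓ H = ⊥)
    {a b : G} (ha : a ∈ K) (hb : b ∈ K)
    (hab : H.map (MulAut.conj a).toMonoidHom = H.map (MulAut.conj b).toMonoidHom)
    {h : G} (hh : h ∈ H) : a * h * a⁻¹ = b * h * b⁻¹ := by
  obtain ⟨y, hy, hyh⟩ : a * h * a⁻¹ ∈ H.map (MulAut.conj b).toMonoidHom := hab ▸ ⟨h, hh, rfl⟩
  simp only [MulEquiv.coe_toMonoidHom, MulAut.conj_apply] at hyh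
  have hy' : y = (b⁻¹ * a) * h * (b⁻¹ * a)⁻¹ :=
    calc y = b⁻¹ * (b * y * b⁻¹) * b := by group
      _ = _ := by rw [hyh]; group
  have := conj_eq_of_mem_normal_of_conj_mem hK hKH (K.mul_mem (K.inv_mem hb) ha) hh (hy' ▸ hy)
  calc a * h * a⁻¹ = b * ((b⁻¹ * a) * h * (b⁻¹ * a)⁻¹) * b⁻¹ := by group
    _ = b * h * b⁻¹ := by rw [this]

end Subgroup

theorem List.prod_ofFn_conj_eq {G : Type*} [Group G] {n : ℕ} (t : Fin n → G) (j : Fin n) {h : G}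
    (ht : ∀ i i', Commute (t i) (t i')) (hh : ∀ i ≠ j, Commute (t i) h) :
    (List.ofFn t).prod * h * (List.ofFn t).prod⁻¹ = t j * h * (t j)⁻¹ := by
  induction n with
  | zero => exact j.elim0
  | succ n ih =>
    rw [List.ofFn_succ, List.prod_cons]
    set u := (List.ofFn fun i => t i.succ).prod
    calc t 0 * u * h * (t 0 * u)⁻¹ = t 0 * (u * h * u⁻¹) * (t 0)⁻¹ := by group
      _ = t j * h * (t j)⁻¹ := by
        cases j using Fin.cases with
        | zero =>
          have hu : Commute u h := Commute.list_prod_left _ _ fun x hx => by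
            obtain ⟨i, rfl⟩ := List.mem_ofFn.mp hx
            exact hh _ (Fin.succ_ne_zero i)
          rw [hu.mul_inv_cancel]
        | succ j =>
          rw [ih (fun i => t i.succ) j (fun i i' => ht _ _)
            fun i hi => hh _ ((Fin.succ_injective _).ne hi)]
          have h0 : Commute (t 0) (t j.succ * h * (t j.succ)⁻¹) :=
            ((ht 0 _).mul_right (hh 0 (Fin.succ_ne_zero j).symm)).mul_right (ht 0 _).inv_right
          rw [h0.mul_inv_cancel]

theorem Commute.ite_one_left {M : Type*} [Monoid M] {c x : M} (h : Commute c x) (b : Bool) :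
    Commute (if b then c else 1) x := by
  cases b <;> simp [h]

theorem commute_of_conj_ite_eq_conj_ite {G : Type*} [Group G] {c x : G} {b b' : Bool}
    (hb : b ≠ b')
    (h : (if b then c else 1) * x * (if b then c else 1)⁻¹ =
      (if b' then c else 1) * x * (if b' then c else 1)⁻¹) :
    Commute c x := by
  rw [commute_iff_eq, ← mul_inv_eq_iff_eq_mul]
  cases b <;> cases b' <;>
    simp only [ne_eq, not_true_eq_false, Bool.false_eq_true, if_true, if_false, one_mul, inv_one,
      mul_one] at hb h
  exacts [h.symm, h]

theorem injective_map_conj_prod_ofFn {G : Type*} [Group G] {p r : ℕ} (hp : p.Prime)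
    {K H : Subgroup G} (hK : K.Normal) (hKH : K ⊓ H = ⊥) (hH : Nat.card H = p ^ r)
    {Hs : Fin r → Subgroup G} (hHs : ∀ i, (Hs i).relIndex H = p) (hindep : (⨅ i, Hs i) ⊓ H = ⊥)
    {c : Fin r → G} (hcK : ∀ i, c i ∈ K)
    (hcHs : ∀ i, c i ∈ Subgroup.centralizer ((Hs i : Subgroup G) : Set G))
    (hcH : ∀ i, c i ∉ Subgroup.centralizer (H : Set G)) (hcomm : ∀ i j, Commute (c i) (c j)) :
    Function.Injective fun δ : Fin r → Bool =>
      H.map (MulAut.conj (List.ofFn fun i => if δ i then c i else 1).prod).toMonoidHom := by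
  have hprod_mem (δ : Fin r → Bool) : (List.ofFn fun i => if δ i then c i else 1).prod ∈ K :=
    K.list_prod_mem fun y hy => by
      obtain ⟨i, rfl⟩ := List.mem_ofFn.mp hy
      split <;> simp [hcK i]
  have hpairwise (δ : Fin r → Bool) (i i' : Fin r) :
      Commute (if δ i then c i else 1) (if δ i' then c i' else 1) :=
    ((hcomm i' i).ite_one_left (δ i')).symm.ite_one_left (δ i)
  intro δ ε hδε
  by_contra hne
  obtain ⟨j, hj⟩ := Function.ne_iff.mp hne
  obtain ⟨x, hxH, hxHs, hxj⟩ :=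
    Subgroup.exists_mem_iInf_ne_notMem_of_iInf_inf_eq_bot hp.one_lt hH Hs hHs hindep j
  have hcx (i) (hi : i ≠ j) : Commute (c i) x := (hcHs i x (hxHs i hi)).symm
  have hconj := Subgroup.conj_eq_conj_of_map_conj_eq hK hKH (hprod_mem δ) (hprod_mem ε) hδε hxH
  rw [List.prod_ofFn_conj_eq _ j (hpairwise δ) fun i hi => (hcx i hi).ite_one_left (δ i),
    List.prod_ofFn_conj_eq _ j (hpairwise ε) fun i hi => (hcx i hi).ite_one_left (ε i)] at hconj
  exact hcH j <| Subgroup.mem_centralizer_of_relIndex_prime (hHs j ▸ hp) (hcHs j)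
    (commute_of_conj_ite_eq_conj_ite hj hconj) hxH hxj

theorem stmt15_general {G : Type*} [Group G] (p r : ℕ) [Fact p.Prime]
    (K H : Subgroup G) (hKn : K.Normal) (hdisj : K ⊓ H = ⊥)
    (hHcard : Nat.card H = p ^ r)
    (Hs : Fin r → Subgroup G)
    (hHsidx : ∀ i, (Hs i).relIndex H = p) (hindep : (⨅ i, Hs i) ⊓ H = ⊥)
    (c : Fin r → G) (hcK : ∀ i, c i ∈ K)
    (hcC : ∀ i, c i ∈ Subgroup.centralizer ((Hs i : Subgroup G) : Set G))
    (hcH : ∀ i, c i ∉ Subgroup.centralizer (H : Set G))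
    (hcomm : ∀ i j, Commute (c i) (c j)) :
    Nat.card {P : Subgroup G // ∃ δ : Fin r → Bool,
        P = H.map (MulAut.conj ((List.ofFn fun i => if δ i then c i else 1).prod)).toMonoidHom} =
      2 ^ r := by
  have hinj := injective_map_conj_prod_ofFn Fact.out hKn hdisj hHcard hHsidx hindep hcK hcC hcH
    hcomm
  calc _ = Nat.card (Set.range fun δ : Fin r → Bool =>
          H.map (MulAut.conj (List.ofFn fun i => if δ i then c i else 1).prod).toMonoidHom) :=
        Nat.card_congr (Equiv.subtypeEquivRight fun _ => exists_congr fun _ => eq_comm)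
    _ = 2 ^ r := by rw [Nat.card_range_of_injective hinj]; simp

/-- Let `G = K ⋊ H` with `H` elementary abelian of order `p^r`, `K` a `p'`-group, `H₁,…,H_r`
linearly independent hyperplanes of `H`, and let `cᵢ ∈ C_K(Hᵢ) \ C_K(H)` pairwise commute.
Then the set `S = { (c₁^{δ₁}⋯c_r^{δ_r}) H (c₁^{δ₁}⋯c_r^{δ_r})⁻¹ : δᵢ ∈ {0,1} }` of conjugates
of `H` has exactly `2^r` elements. -/
theorem stmt15 {G : Type*} [Group G] [Finite G] (p r : ℕ) [Fact p.Prime]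
    (K H : Subgroup G) (hKn : K.Normal) (hdisj : K ⊓ H = ⊥) (hsup : K ⊔ H = ⊤)
    (hHcard : Nat.card H = p ^ r) (helem : ∀ x ∈ H, x ^ p = 1)
    (hHab : ∀ a ∈ H, ∀ b ∈ H, a * b = b * a)
    (hK' : ¬ p ∣ Nat.card K)
    (Hs : Fin r → Subgroup G) (hHsH : ∀ i, Hs i ≤ H)
    (hHsidx : ∀ i, (Hs i).relIndex H = p) (hindep : (⨅ i, Hs i) ⊓ H = ⊥)
    (c : Fin r → G) (hcK : ∀ i, c i ∈ K)
    (hcC : ∀ i, c i ∈ Subgroup.centralizer ((Hs i : Subgroup G) : Set G))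
    (hcH : ∀ i, c i ∉ Subgroup.centralizer (H : Set G))
    (hcomm : ∀ i j, Commute (c i) (c j)) :
    Nat.card {P : Subgroup G // ∃ δ : Fin r → Bool,
        P = H.map (MulAut.conj ((List.ofFn fun i => if δ i then c i else 1).prod)).toMonoidHom} =
      2 ^ r :=
  stmt15_general p r K H hKn hdisj hHcard Hs hHsidx hindep c hcK hcC hcH hcomm
end

section
/- Let G = K ⋊ H with H = (ℤ/p)^r and K a p'-group, let H₁,…,H_r be linearly independent hyperplanes of H, and let c₁,…,c_r ∈ K be pairwise commuting elements with c_i ∈ C_K(H_i) \ C_K(H). Define S = { c^δ H (c^δ)⁻¹ : δ ∈ {0,1}^r } where c^δ = c₁^{δ₁}⋯c_r^{δ_r}. Then for every i ∈ {1,…,r} and every k ∈ K, the number of elements of S containing the conjugate k H_i k⁻¹ is even. -/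
/-!
For `g, k ∈ K` and `L ≤ H` we have `k L k⁻¹ ≤ g H g⁻¹` iff `g⁻¹ k` centralizes `L`: since
`K ⊓ H = ⊥` and `K` is normal, an element of `K` conjugating `h ∈ H` into `H` commutes with `h`.
So `c^δ H (c^δ)⁻¹` contains `k Hᵢ k⁻¹` iff `(c^δ)⁻¹ k ∈ C(Hᵢ)`, and this is unchanged by toggling
`δᵢ`, because `cᵢ ∈ C(Hᵢ)` commutes with every `cⱼ`. Toggling `δᵢ` is a fixed-point-free involution,
so the admissible `δ` come in pairs. Distinct `δ` give distinct conjugates: the centralizer of `cⱼ`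
in `H` is exactly `Hⱼ`, so by independence some element of `⋂_{l ≠ j} H_l` does not commute with
`cⱼ`, and commuting with it detects the coordinate `δⱼ`.
-/

open Subgroup Function

theorem List.prod_ofFn_eq_mul_prod_ofFn_update {M : Type*} [Monoid M] {n : ℕ} (f : Fin n → M)
    (hf : ∀ a b, Commute (f a) (f b)) (i : Fin n) :
    (List.ofFn f).prod = f i * (List.ofFn (update f i 1)).prod := by
  induction n with
  | zero => exact i.elim0
  | succ n ih =>
    simp only [List.ofFn_succ, List.prod_cons]
    cases i using Fin.cases with
    | zero => simp
    | succ i =>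
      rw [update_of_ne (Fin.succ_ne_zero i).symm, ← comp_def (update f i.succ 1) Fin.succ,
        update_comp_eq_of_injective _ (Fin.succ_injective n), ih _ (fun a b => hf _ _),
        ← mul_assoc, ← mul_assoc, (hf 0 i.succ).eq, comp_def]

section SelectProd
variable {G : Type*} [Group G] {r : ℕ}

/-- The paper's `c^δ = c₁^{δ₁} ⋯ c_r^{δ_r}`. -/
def selectProd (c : Fin r → G) (δ : Fin r → Bool) : G :=
  (List.ofFn fun j => if δ j then c j else 1).prod

variable {c : Fin r → G}

theorem selectProd_mem {S : Subgroup G} {δ : Fin r → Bool} (h : ∀ j, δ j = true → c j ∈ S) :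
    selectProd c δ ∈ S :=
  list_prod_mem fun x hx => by
    obtain ⟨j, rfl⟩ := List.mem_ofFn.1 hx
    split_ifs with hj
    exacts [h j hj, S.one_mem]

theorem selectProd_eq_mul (hc : ∀ a b, Commute (c a) (c b)) (δ : Fin r → Bool) (j : Fin r) :
    selectProd c δ = (if δ j then c j else 1) * selectProd c (update δ j false) := by
  rw [selectProd, List.prod_ofFn_eq_mul_prod_ofFn_update _ ?_ j]
  · congr 3
    funext l
    rcases eq_or_ne l j with rfl | hl
    · simp
    · simp [update_of_ne hl]
  · intro a b
    split_ifs <;> simp [hc a b]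

theorem commute_selectProd (hc : ∀ a b, Commute (c a) (c b)) (j : Fin r) (δ : Fin r → Bool) :
    Commute (c j) (selectProd c δ) :=
  Subgroup.mem_centralizer_singleton_iff.1 (selectProd_mem fun l _ =>
    Subgroup.mem_centralizer_singleton_iff.2 (hc j l).symm.eq) |>.symm

theorem inv_selectProd_update_mul_mem_iff (hc : ∀ a b, Commute (c a) (c b)) {C : Subgroup G}
    {i : Fin r} (hci : c i ∈ C) (δ : Fin r → Bool) (b : Bool) (k : G) :
    (selectProd c (update δ i b))⁻¹ * k ∈ C ↔ (selectProd c δ)⁻¹ * k ∈ C := by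
  suffices key : ∀ θ, (selectProd c θ)⁻¹ * k ∈ C ↔ (selectProd c (update θ i false))⁻¹ * k ∈ C by
    rw [key, key δ, update_idem]
  intro θ
  rw [selectProd_eq_mul hc θ i]
  cases θ i
  · simp
  · rw [if_pos rfl, (commute_selectProd hc i _).eq, mul_inv_rev, mul_assoc,
      C.mul_mem_cancel_left (C.inv_mem hci)]

theorem eq_of_commute_inv_selectProd_mul (hc : ∀ a b, Commute (c a) (c b)) {j : Fin r} {h : G}
    (hl : ∀ l ≠ j, Commute (c l) h) (hj : ¬Commute (c j) h) {δ ε : Fin r → Bool}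
    (hδε : Commute ((selectProd c δ)⁻¹ * selectProd c ε) h) : δ j = ε j := by
  set Z := centralizer ({h} : Set G)
  have hZ (θ : Fin r → Bool) : selectProd c (update θ j false) ∈ Z := by
    refine selectProd_mem fun l hl' => mem_centralizer_singleton_iff.2 (hl l ?_).eq
    rintro rfl
    simp at hl'
  have hx : (if δ j then c j else 1)⁻¹ * (if ε j then c j else 1) ∈ Z := by
    have e : (if δ j then c j else 1)⁻¹ * (if ε j then c j else 1) =
        selectProd c (update δ j false) * ((selectProd c δ)⁻¹ * selectProd c ε) *
          (selectProd c (update ε j false))⁻¹ := by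
      rw [selectProd_eq_mul hc δ j, selectProd_eq_mul hc ε j]
      group
    rw [e]
    exact Z.mul_mem (Z.mul_mem (hZ δ) (mem_centralizer_singleton_iff.2 hδε.eq)) (Z.inv_mem (hZ ε))
  cases hδ : δ j <;> cases hε : ε j <;> simp [hδ, hε] at hx ⊢
  all_goals exact hj (mem_centralizer_singleton_iff.1 hx)

end SelectProd

theorem Nat.card_subtype_exists_eq_and {α β : Type*} {F : α → β} (hF : Injective F)
    (Q : β → Prop) : Nat.card {b // (∃ a, b = F a) ∧ Q b} = Nat.card {a // Q (F a)} :=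
  Nat.card_congr <| .symm <| .ofBijective (fun a => ⟨F a, ⟨a, rfl⟩, a.2⟩)
    ⟨fun _ _ h => Subtype.ext (hF (congrArg Subtype.val h)),
      by rintro ⟨_, ⟨a, rfl⟩, hQ⟩; exact ⟨⟨a, hQ⟩, rfl⟩⟩

theorem even_card_subtype_of_update_iff {ι : Type*} [DecidableEq ι] (P : (ι → Bool) → Prop)
    (i : ι) (hP : ∀ δ b, P (update δ i b) ↔ P δ) : Even (Nat.card {δ // P δ}) := by
  let Q (g : {j // j ≠ i} → Bool) : Prop := P ((Equiv.funSplitAt i Bool).symm (false, g))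
  have hPQ (δ : ι → Bool) : P δ ↔ Q ((Equiv.funSplitAt i Bool δ).2) := by
    convert (hP δ false).symm using 2
    funext j
    rcases eq_or_ne j i with rfl | hj <;> simp [Equiv.funSplitAt_symm_apply, *]
  have e : {δ // P δ} ≃ {g // Q g} × Bool :=
    ((Equiv.funSplitAt i Bool).trans (Equiv.prodComm _ _)).subtypeEquiv hPQ |>.trans
      Equiv.prodSubtypeFstEquivSubtypeProd
  rw [Nat.card_congr e, Nat.card_prod, Nat.card_eq_fintype_card (α := Bool), Fintype.card_bool]
  exact even_two.mul_left _

section Hyperplanes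
variable {G : Type*} [Group G]

theorem Subgroup.eq_or_eq_of_le_of_relIndex_prime {A M H : Subgroup G} (hAM : A ≤ M)
    (hMH : M ≤ H) (hp : (A.relIndex H).Prime) : M = A ∨ M = H := by
  rw [← relIndex_mul_relIndex A M H hAM hMH, Nat.prime_mul_iff] at hp
  rcases hp with ⟨-, h⟩ | ⟨-, h⟩
  · exact .inr (hMH.antisymm (relIndex_eq_one.1 h))
  · exact .inl ((relIndex_eq_one.1 h).antisymm hAM)

theorem Subgroup.centralizer_singleton_inf_eq {L H : Subgroup G} (hLH : L ≤ H)
    (hp : (L.relIndex H).Prime) {x : G} (hxL : x ∈ centralizer (L : Set G))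
    (hxH : x ∉ centralizer (H : Set G)) : centralizer {x} ⊓ H = L := by
  refine (eq_or_eq_of_le_of_relIndex_prime (le_inf (fun h hh => ?_) hLH) inf_le_right
    hp).resolve_right fun hH => hxH fun h hh => ?_
  · exact mem_centralizer_singleton_iff.2 (hxL h hh)
  · exact mem_centralizer_singleton_iff.1 (hH.ge hh).1

theorem Subgroup.exists_mem_forall_ne_mem_and_notMem {p r : ℕ} (hp : 1 < p)
    {H : Subgroup G} (hH : Nat.card H = p ^ r) {Hs : Fin r → Subgroup G}
    (hidx : ∀ i, (Hs i).relIndex H = p) (hindep : (⨅ i, Hs i) ⊓ H = ⊥) (j : Fin r) :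
    ∃ x ∈ H, (∀ l ≠ j, x ∈ Hs l) ∧ x ∉ Hs j := by
  by_contra! hcon
  set B := ⨅ l : {l // l ≠ j}, Hs l
  have hB : B ⊓ H = ⊥ := by
    refine eq_bot_iff.2 fun x hx => hindep ▸ ⟨mem_iInf.2 fun l => ?_, hx.2⟩
    have hxB (l) (hl : l ≠ j) : x ∈ Hs l := mem_iInf.1 hx.1 ⟨l, hl⟩
    rcases eq_or_ne l j with rfl | hl
    exacts [hcon x hx.2 hxB, hxB l hl]
  have : p ^ r ≤ p ^ (r - 1) := calc
    p ^ r = B.relIndex H := by rw [← inf_relIndex_right, hB, relIndex_bot_left, hH]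
    _ ≤ ∏ l : {l // l ≠ j}, (Hs l).relIndex H := relIndex_iInf_le _
    _ = p ^ (r - 1) := by simp [hidx]
  exact this.not_gt (Nat.pow_lt_pow_right hp (Nat.sub_lt j.pos one_pos))

end Hyperplanes

section SemidirectConjugation
variable {G : Type*} [Group G] {K H : Subgroup G}

theorem commute_of_mul_mul_inv_mem (hK : K.Normal) (hKH : K ⊓ H = ⊥) {w h : G}
    (hw : w ∈ K) (hh : h ∈ H) (hwh : w * h * w⁻¹ ∈ H) : Commute w h := by
  rw [← commutatorElement_eq_one_iff_commute, ← mem_bot, ← hKH, commutatorElement_def]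
  refine mem_inf.2 ⟨?_, ?_⟩
  · simpa only [mul_assoc] using K.mul_mem hw (hK.conj_mem _ (K.inv_mem hw) h)
  · exact H.mul_mem hwh (H.inv_mem hh)

theorem map_conj_le_iff_mem_centralizer (hK : K.Normal) (hKH : K ⊓ H = ⊥) {L : Subgroup G}
    (hLH : L ≤ H) {w : G} (hw : w ∈ K) :
    L.map (MulAut.conj w).toMonoidHom ≤ H ↔ w ∈ centralizer (L : Set G) := by
  constructor
  · rintro hle h hh
    exact (commute_of_mul_mul_inv_mem hK hKH hw (hLH hh) (hle ⟨h, hh, rfl⟩)).eq.symm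
  · rintro hw' _ ⟨h, hh, rfl⟩
    simpa [← (hw' h hh)] using hLH hh

theorem map_conj_le_map_conj_iff (hK : K.Normal) (hKH : K ⊓ H = ⊥) {L : Subgroup G}
    (hLH : L ≤ H) {g k : G} (hg : g ∈ K) (hk : k ∈ K) :
    L.map (MulAut.conj k).toMonoidHom ≤ H.map (MulAut.conj g).toMonoidHom ↔
      g⁻¹ * k ∈ centralizer (L : Set G) := by
  have conj_comp (a b : G) : (MulAut.conj a).toMonoidHom.comp (MulAut.conj b).toMonoidHom =
      (MulAut.conj (a * b)).toMonoidHom := MonoidHom.ext fun x => by simp [mul_assoc]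
  rw [← map_conj_le_iff_mem_centralizer hK hKH hLH (K.mul_mem (K.inv_mem hg) hk),
    ← map_le_map_iff_of_injective (f := (MulAut.conj g⁻¹).toMonoidHom)
      (MulAut.conj g⁻¹).injective, map_map, map_map, conj_comp, conj_comp, inv_mul_cancel,
    map_one]
  exact Iff.of_eq (congrArg _ (map_id H))

theorem inv_mul_mem_centralizer_of_map_conj_eq (hK : K.Normal) (hKH : K ⊓ H = ⊥) {g k : G}
    (hg : g ∈ K) (hk : k ∈ K)
    (h : H.map (MulAut.conj g).toMonoidHom = H.map (MulAut.conj k).toMonoidHom) :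
    g⁻¹ * k ∈ centralizer (H : Set G) :=
  (map_conj_le_map_conj_iff hK hKH le_rfl hg hk).1 h.ge

end SemidirectConjugation

theorem stmt16_general {G : Type*} [Group G] (p r : ℕ) [Fact p.Prime]
    (K H : Subgroup G) (hKn : K.Normal) (hdisj : K ⊓ H = ⊥)
    (hHcard : Nat.card H = p ^ r)
    (Hs : Fin r → Subgroup G) (hHsH : ∀ i, Hs i ≤ H)
    (hHsidx : ∀ i, (Hs i).relIndex H = p) (hindep : (⨅ i, Hs i) ⊓ H = ⊥)
    (c : Fin r → G) (hcK : ∀ i, c i ∈ K)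
    (hcC : ∀ i, c i ∈ Subgroup.centralizer ((Hs i : Subgroup G) : Set G))
    (hcH : ∀ i, c i ∉ Subgroup.centralizer (H : Set G))
    (hcomm : ∀ i j, Commute (c i) (c j)) :
    ∀ (i : Fin r) (k : G), k ∈ K →
      Even (Nat.card {P : Subgroup G //
        (∃ δ : Fin r → Bool,
          P = H.map (MulAut.conj
            ((List.ofFn fun j => if δ j then c j else 1).prod)).toMonoidHom) ∧
        (Hs i).map (MulAut.conj k).toMonoidHom ≤ P}) := by
  intro i k hk
  have hp : p.Prime := Fact.out
  have hmemK (δ : Fin r → Bool) : selectProd c δ ∈ K := selectProd_mem fun j _ => hcK j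
  have hsep (j : Fin r) : ∃ h ∈ H, (∀ l ≠ j, Commute (c l) h) ∧ ¬Commute (c j) h := by
    obtain ⟨x, hxH, hxl, hxj⟩ :=
      exists_mem_forall_ne_mem_and_notMem hp.one_lt hHcard hHsidx hindep j
    refine ⟨x, hxH, fun l hl => (hcC l x (hxl l hl)).symm, fun hx => hxj ?_⟩
    rw [← centralizer_singleton_inf_eq (hHsH j) (hHsidx j ▸ hp) (hcC j) (hcH j)]
    exact ⟨mem_centralizer_singleton_iff.2 hx.eq.symm, hxH⟩
  have hinj : Injective fun δ => H.map (MulAut.conj (selectProd c δ)).toMonoidHom := by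
    intro δ ε hδε
    funext j
    obtain ⟨h, hhH, hl, hj⟩ := hsep j
    exact eq_of_commute_inv_selectProd_mul hcomm hl hj
      (inv_mul_mem_centralizer_of_map_conj_eq hKn hdisj (hmemK δ) (hmemK ε) hδε h hhH).symm
  unfold selectProd at hinj
  rw [Nat.card_subtype_exists_eq_and hinj]
  convert even_card_subtype_of_update_iff (fun δ => (selectProd c δ)⁻¹ * k ∈ centralizer (Hs i))
    i fun δ b => inv_selectProd_update_mul_mem_iff hcomm (hcC i) δ b k using 1
  exact Nat.card_congr <| Equiv.subtypeEquivRight fun δ =>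
    map_conj_le_map_conj_iff hKn hdisj (hHsH i) (hmemK δ) hk

/-- Let `G = K ⋊ H` with `H` elementary abelian of order `p^r`, `K` a `p'`-group, `H₁,…,H_r`
linearly independent hyperplanes of `H`, and let `cᵢ ∈ C_K(Hᵢ) \ C_K(H)` pairwise commute.
Let `S = { c^δ H (c^δ)⁻¹ : δ ∈ {0,1}^r }` where `c^δ = c₁^{δ₁}⋯c_r^{δ_r}`. Then for every
`i` and every `k ∈ K`, the number of members of `S` containing `k Hᵢ k⁻¹` is even. -/
theorem stmt16 {G : Type*} [Group G] [Finite G] (p r : ℕ) [Fact p.Prime]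
    (K H : Subgroup G) (hKn : K.Normal) (hdisj : K ⊓ H = ⊥) (hsup : K ⊔ H = ⊤)
    (hHcard : Nat.card H = p ^ r) (helem : ∀ x ∈ H, x ^ p = 1)
    (hHab : ∀ a ∈ H, ∀ b ∈ H, a * b = b * a)
    (hK' : ¬ p ∣ Nat.card K)
    (Hs : Fin r → Subgroup G) (hHsH : ∀ i, Hs i ≤ H)
    (hHsidx : ∀ i, (Hs i).relIndex H = p) (hindep : (⨅ i, Hs i) ⊓ H = ⊥)
    (c : Fin r → G) (hcK : ∀ i, c i ∈ K)
    (hcC : ∀ i, c i ∈ Subgroup.centralizer ((Hs i : Subgroup G) : Set G))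
    (hcH : ∀ i, c i ∉ Subgroup.centralizer (H : Set G))
    (hcomm : ∀ i j, Commute (c i) (c j)) :
    ∀ (i : Fin r) (k : G), k ∈ K →
      Even (Nat.card {P : Subgroup G //
        (∃ δ : Fin r → Bool,
          P = H.map (MulAut.conj
            ((List.ofFn fun j => if δ j then c j else 1).prod)).toMonoidHom) ∧
        (Hs i).map (MulAut.conj k).toMonoidHom ≤ P}) :=
  stmt16_general p r K H hKn hdisj hHcard Hs hHsH hHsidx hindep c hcK hcC hcH hcomm
end
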